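/- arXiv:2605.12859 — 12 statements merged into one kernel-verified Lean document; each statement's English description precedes it below -/
import Mathlib

section
/- Let R = {1, 3, 17, 19}, S = {3, 7, 11, 25}, T = {3, 5, 13, 23} as subsets of ZMod 54. The circulant graphs C₅₄(R), C₅₄(S), C₅₄(T) are pairwise isomorphic, yet for every unit u of ZMod 54 one has u·R^± ≠ S^± and u·R^± ≠ T^±; in particular C₅₄(R) is isomorphic to C₅₄(S) and to C₅₄(T) but Adam isomorphic to neither, so the triple C₅₄(R), C₅₄(S), C₅₄(T) is Type-2 isomorphic. -/
set_option maxRecDepth 8000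
open SimpleGraph

private def f1 : ZMod 54 → ZMod 54 := fun x => x + 6 * (x.val % 3 : ℕ)
private def f2 : ZMod 54 → ZMod 54 := fun x => x + 6 * ((2 * x.val) % 3 : ℕ)

private lemma f1bij : Function.Bijective f1 := by decide
private lemma f2bij : Function.Bijective f2 := by decide

private lemma hRS : ∀ a b : ZMod 54,
    (circulantGraph ({3,7,11,25} : Set (ZMod 54))).Adj (f1 a) (f1 b) ↔
    (circulantGraph ({1,3,17,19} : Set (ZMod 54))).Adj a b := by decide

private lemma hRT : ∀ a b : ZMod 54,
    (circulantGraph ({3,5,13,23} : Set (ZMod 54))).Adj (f2 a) (f2 b) ↔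
    (circulantGraph ({1,3,17,19} : Set (ZMod 54))).Adj a b := by decide

private lemma hST : ∀ a b : ZMod 54,
    (circulantGraph ({3,5,13,23} : Set (ZMod 54))).Adj (f1 a) (f1 b) ↔
    (circulantGraph ({3,7,11,25} : Set (ZMod 54))).Adj a b := by decide

private lemma noS : ∀ c : ZMod 54,
    ((c = 3 ∨ c = 7 ∨ c = 11 ∨ c = 25) ∨ -c = 3 ∨ -c = 7 ∨ -c = 11 ∨ -c = 25) →
    ((3*c = 3 ∨ 3*c = 7 ∨ 3*c = 11 ∨ 3*c = 25) ∨ -(3*c) = 3 ∨ -(3*c) = 7 ∨ -(3*c) = 11 ∨ -(3*c) = 25) →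
    False := by decide

private lemma noT : ∀ c : ZMod 54,
    ((c = 3 ∨ c = 5 ∨ c = 13 ∨ c = 23) ∨ -c = 3 ∨ -c = 5 ∨ -c = 13 ∨ -c = 23) →
    ((3*c = 3 ∨ 3*c = 5 ∨ 3*c = 13 ∨ 3*c = 23) ∨ -(3*c) = 3 ∨ -(3*c) = 5 ∨ -(3*c) = 13 ∨ -(3*c) = 23) →
    False := by decide

/-- For `R = {1, 3, 17, 19}`, `S = {3, 7, 11, 25}`, `T = {3, 5, 13, 23}` in `ZMod 54`, the
circulant graphs `C₅₄(R)`, `C₅₄(S)`, `C₅₄(T)` are pairwise isomorphic, but for every unit `u`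
of `ZMod 54` we have `u·R^± ≠ S^±` and `u·R^± ≠ T^±`  (where `R^± = R ∪ -R`): the triple is
Type-2 isomorphic. -/
theorem stmt_4 :
    let R : Set (ZMod 54) := {1, 3, 17, 19}
    let S : Set (ZMod 54) := {3, 7, 11, 25}
    let T : Set (ZMod 54) := {3, 5, 13, 23}
    (Nonempty (circulantGraph R ≃g circulantGraph S) ∧
      Nonempty (circulantGraph R ≃g circulantGraph T) ∧
      Nonempty (circulantGraph S ≃g circulantGraph T)) ∧
    ∀ u : (ZMod 54)ˣ,
      (fun r => (u : ZMod 54) * r) '' (R ∪ -R) ≠ S ∪ -S ∧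
      (fun r => (u : ZMod 54) * r) '' (R ∪ -R) ≠ T ∪ -T := by
  intro R S T
  refine ⟨⟨⟨⟨Equiv.ofBijective f1 f1bij, fun {a b} => hRS a b⟩⟩,
    ⟨⟨Equiv.ofBijective f2 f2bij, fun {a b} => hRT a b⟩⟩,
    ⟨⟨Equiv.ofBijective f1 f1bij, fun {a b} => hST a b⟩⟩⟩, ?_⟩
  intro u
  have h1R : (1 : ZMod 54) ∈ R ∪ -R := by simp [R]
  have h3R : (3 : ZMod 54) ∈ R ∪ -R := by simp [R]
  constructor <;> intro h
  · have m1 : (u : ZMod 54) * 1 ∈ S ∪ -S := h ▸ ⟨1, h1R, rfl⟩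
    have m3 : (u : ZMod 54) * 3 ∈ S ∪ -S := h ▸ ⟨3, h3R, rfl⟩
    simp only [mul_one, Set.mem_union, Set.mem_neg, Set.mem_insert_iff,
      Set.mem_singleton_iff, S] at m1 m3
    rw [mul_comm] at m3
    exact noS _ m1 m3
  · have m1 : (u : ZMod 54) * 1 ∈ T ∪ -T := h ▸ ⟨1, h1R, rfl⟩
    have m3 : (u : ZMod 54) * 3 ∈ T ∪ -T := h ▸ ⟨3, h3R, rfl⟩
    simp only [mul_one, Set.mem_union, Set.mem_neg, Set.mem_insert_iff,
      Set.mem_singleton_iff, T] at m1 m3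
    rw [mul_comm] at m3
    exact noT _ m1 m3
end

section
/- Define θ : ZMod 54 → ZMod 54 by θ(x) = x + 12·j(x). Then θ is a bijection and a graph isomorphism from C₅₄({2, 3, 16, 20}) onto C₅₄({3, 8, 10, 26}); that is, for all a, b ∈ ZMod 54, a and b are adjacent in C₅₄({2, 3, 16, 20}) if and only if θ(a) and θ(b) are adjacent in C₅₄({3, 8, 10, 26}). -/
open SimpleGraph

/-- `j x` is the residue of `x : ZMod 54` modulo `3`, as a natural number. -/
def j54 (x : ZMod 54) : ℕ :=
  (ZMod.castHom (by norm_num : (3 : ℕ) ∣ 54) (ZMod 3) x).val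

/-- The map `θ(x) = x + 12·j(x)` is a bijection and a graph isomorphism from
`C₅₄({2, 3, 16, 20})` onto `C₅₄({3, 8, 10, 26})`. -/
theorem stmt_6 :
    let θ : ZMod 54 → ZMod 54 := fun x => x + 12 * (j54 x : ZMod 54)
    Function.Bijective θ ∧
    ∀ a b : ZMod 54,
      (circulantGraph ({2, 3, 16, 20} : Set (ZMod 54))).Adj a b ↔
        (circulantGraph ({3, 8, 10, 26} : Set (ZMod 54))).Adj (θ a) (θ b) := by
  set_option maxRecDepth 20000 in
  decide
end

section
/- Let R = {2, 3, 16, 20}, S = {3, 4, 14, 22}, T = {3, 8, 10, 26} as subsets of ZMod 54. The circulant graphs C₅₄(R), C₅₄(S), C₅₄(T) are pairwise isomorphic, yet for every unit u of ZMod 54 one has u·R^± ≠ S^± and u·R^± ≠ T^±; in particular C₅₄(R) is isomorphic to C₅₄(S) and to C₅₄(T) but Adam isomorphic to neither, so the triple C₅₄(R), C₅₄(S), C₅₄(T) is Type-2 isomorphic. -/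
open SimpleGraph

/-- Map witnessing `C₅₄({2,3,16,20}) ≅ C₅₄({3,4,14,22})`. -/
def fS' : ZMod 54 → ZMod 54 := fun x => x + 6 * (x.val % 3 : ℕ)

/-- Map witnessing `C₅₄({2,3,16,20}) ≅ C₅₄({3,8,10,26})`. -/
def fT' : ZMod 54 → ZMod 54 := fun x => -x + 6 * (x.val % 3 : ℕ)

lemma fS'_bij : Function.Bijective fS' := by decide

lemma fT'_bij : Function.Bijective fT' := by decide

set_option maxRecDepth 40000 in
set_option maxHeartbeats 1600000 in
/-- For `R = {2, 3, 16, 20}`, `S = {3, 4, 14, 22}`, `T = {3, 8, 10, 26}` in `ZMod 54`, the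
circulant graphs `C₅₄(R)`, `C₅₄(S)`, `C₅₄(T)` are pairwise isomorphic, but for every unit `u`
of `ZMod 54` we have `u·R^± ≠ S^±` and `u·R^± ≠ T^±` (where `R^± = R ∪ -R`): the triple is
Type-2 isomorphic. -/
theorem stmt_7 :
    let R : Set (ZMod 54) := {2, 3, 16, 20}
    let S : Set (ZMod 54) := {3, 4, 14, 22}
    let T : Set (ZMod 54) := {3, 8, 10, 26}
    (Nonempty (circulantGraph R ≃g circulantGraph S) ∧
      Nonempty (circulantGraph R ≃g circulantGraph T) ∧
      Nonempty (circulantGraph S ≃g circulantGraph T)) ∧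
    ∀ u : (ZMod 54)ˣ,
      (fun r => (u : ZMod 54) * r) '' (R ∪ -R) ≠ S ∪ -S ∧
      (fun r => (u : ZMod 54) * r) '' (R ∪ -R) ≠ T ∪ -T := by
  intro R S T
  have isoS : circulantGraph R ≃g circulantGraph S := by
    refine ⟨Equiv.ofBijective fS' fS'_bij, ?_⟩
    intro a b
    simp only [Equiv.ofBijective_apply, circulantGraph_adj, Set.mem_insert_iff,
      Set.mem_singleton_iff, R, S]
    revert a b
    decide
  have isoT : circulantGraph R ≃g circulantGraph T := by
    refine ⟨Equiv.ofBijective fT' fT'_bij, ?_⟩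
    intro a b
    simp only [Equiv.ofBijective_apply, circulantGraph_adj, Set.mem_insert_iff,
      Set.mem_singleton_iff, R, T]
    revert a b
    decide
  refine ⟨⟨⟨isoS⟩, ⟨isoT⟩, ⟨isoS.symm.trans isoT⟩⟩, ?_⟩
  intro u
  constructor
  · intro h
    rw [Set.ext_iff] at h
    simp only [Set.mem_image, Set.mem_union, Set.mem_neg, Set.mem_insert_iff,
      Set.mem_singleton_iff, R, S] at h
    revert h
    generalize (u : ZMod 54) = w
    revert w
    decide
  · intro h
    rw [Set.ext_iff] at h
    simp only [Set.mem_image, Set.mem_union, Set.mem_neg, Set.mem_insert_iff,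
      Set.mem_singleton_iff, R, T] at h
    revert h
    generalize (u : ZMod 54) = w
    revert w
    decide
end

section
/- Let m, n, t be natural numbers with 0 < m, 0 < n and m ∣ n. Define θ : ZMod n → ZMod n by θ(x) = x + m·t·j(x). Then θ is bijective. -/
/-- For `m ∣ n` with `0 < m`, `0 < n`, and any `t : ℕ`, the map
`θ(x) = x + m·t·j(x)` on `ZMod n` is bijective, where `j(x)` is the residue of `x` mod `m`. -/
theorem stmt_8 (m n t : ℕ) (hm : 0 < m) (hn : 0 < n) (hmn : m ∣ n) :
    Function.Bijective (fun x : ZMod n =>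
      x + (m : ZMod n) * (t : ZMod n) * ((ZMod.castHom hmn (ZMod m) x).val : ZMod n)) := by
  haveI : NeZero n := ⟨hn.ne'⟩
  apply Finite.injective_iff_bijective.mp
  intro x y h
  simp only at h
  have hc : (ZMod.castHom hmn (ZMod m)) x = (ZMod.castHom hmn (ZMod m)) y := by
    have := congrArg (ZMod.castHom hmn (ZMod m)) h
    simpa [map_add, map_mul, map_natCast, ZMod.natCast_self] using this
  rw [hc] at h
  exact add_right_cancel h
end

section
/- Let m, n, t be natural numbers with 0 < m, 0 < n and m ∣ n, and define θ : ZMod n → ZMod n by θ(x) = x + m·t·j(x). Let R, S ⊆ ZMod n and suppose that for all a, b ∈ ZMod n, a and b are adjacent in C_n(R) if and only if θ(a) and θ(b) are adjacent in C_n(S). Then for every T ⊆ ZMod n, and for all a, b ∈ ZMod n, a and b are adjacent in C_n(R ∪ m·T) if and only if θ(a) and θ(b) are adjacent in C_n(S ∪ m·T), where m·T = {m·t' : t' ∈ T}. -/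
open SimpleGraph

/-- The map `θ(x) = x + m·t·j(x)` on `ZMod n`, where `j(x)` is the residue of `x` mod `m`. -/
def theta (m n t : ℕ) (hmn : m ∣ n) (x : ZMod n) : ZMod n :=
  x + (m : ZMod n) * (t : ZMod n) * ((ZMod.castHom hmn (ZMod m) x).val : ZMod n)

lemma castHom_m_zero (m n : ℕ) (hmn : m ∣ n) :
    (ZMod.castHom hmn (ZMod m)) ((m : ZMod n)) = 0 := by
  rw [map_natCast]
  exact ZMod.natCast_self m

lemma theta_sub_of_mem (m n t : ℕ) (hmn : m ∣ n) (T : Set (ZMod n)) (x y : ZMod n)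
    (hx : x - y ∈ (fun t' => (m : ZMod n) * t') '' T) :
    theta m n t hmn x - theta m n t hmn y = x - y := by
  obtain ⟨t', _, ht'⟩ := hx
  have hcast : (ZMod.castHom hmn (ZMod m)) x = (ZMod.castHom hmn (ZMod m)) y := by
    have : (ZMod.castHom hmn (ZMod m)) (x - y) = 0 := by
      rw [← ht', map_mul, castHom_m_zero, zero_mul]
    have h2 := map_sub (ZMod.castHom hmn (ZMod m)) x y
    rw [this] at h2
    linear_combination -h2
  simp only [theta, hcast]
  ring

lemma castHom_theta (m n t : ℕ) (hmn : m ∣ n) (x : ZMod n) :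
    (ZMod.castHom hmn (ZMod m)) (theta m n t hmn x) = (ZMod.castHom hmn (ZMod m)) x := by
  simp only [theta, map_add, map_mul, castHom_m_zero, zero_mul, add_zero]

lemma theta_sub_of_mem' (m n t : ℕ) (hmn : m ∣ n) (T : Set (ZMod n)) (x y : ZMod n)
    (hx : theta m n t hmn x - theta m n t hmn y ∈ (fun t' => (m : ZMod n) * t') '' T) :
    theta m n t hmn x - theta m n t hmn y = x - y := by
  obtain ⟨t', _, ht'⟩ := hx
  have hcast : (ZMod.castHom hmn (ZMod m)) x = (ZMod.castHom hmn (ZMod m)) y := by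
    have : (ZMod.castHom hmn (ZMod m)) (theta m n t hmn x - theta m n t hmn y) = 0 := by
      rw [← ht', map_mul, castHom_m_zero, zero_mul]
    rw [map_sub, castHom_theta, castHom_theta, sub_eq_zero] at this
    exact this
  simp only [theta, hcast]
  ring

/-- If `θ(x) = x + m·t·j(x)` gives an adjacency-preserving correspondence from `C_n(R)` to
`C_n(S)`, then for every `T ⊆ ZMod n` it also gives one from `C_n(R ∪ m·T)` to
`C_n(S ∪ m·T)`. -/
theorem stmt_10 (m n t : ℕ) (hm : 0 < m) (hn : 0 < n) (hmn : m ∣ n)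
    (R S : Set (ZMod n))
    (h : ∀ a b : ZMod n,
      (circulantGraph R).Adj a b ↔
        (circulantGraph S).Adj (theta m n t hmn a) (theta m n t hmn b)) :
    ∀ T : Set (ZMod n), ∀ a b : ZMod n,
      (circulantGraph (R ∪ (fun t' => (m : ZMod n) * t') '' T)).Adj a b ↔
        (circulantGraph (S ∪ (fun t' => (m : ZMod n) * t') '' T)).Adj
          (theta m n t hmn a) (theta m n t hmn b) := by
  intro T a b
  simp only [circulantGraph, fromRel_adj, Set.mem_union] at h ⊢
  constructor
  · rintro ⟨hab, (⟨hR | hD⟩ | ⟨hR | hD⟩)⟩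
    · obtain ⟨h1, h2⟩ := (h a b).mp ⟨hab, Or.inl hR⟩
      exact ⟨h1, h2.imp Or.inl Or.inl⟩
    · have e := theta_sub_of_mem m n t hmn T a b hD
      refine ⟨?_, Or.inl (Or.inr (e ▸ hD))⟩
      intro hne
      exact hab (by rwa [hne, sub_self, eq_comm, sub_eq_zero] at e)
    · obtain ⟨h1, h2⟩ := (h a b).mp ⟨hab, Or.inr hR⟩
      exact ⟨h1, h2.imp Or.inl Or.inl⟩
    · have e := theta_sub_of_mem m n t hmn T b a hD
      refine ⟨?_, Or.inr (Or.inr (e ▸ hD))⟩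
      intro hne
      exact hab (by rwa [hne, sub_self, eq_comm, sub_eq_zero, eq_comm] at e)
  · rintro ⟨hab, (⟨hS | hD⟩ | ⟨hS | hD⟩)⟩
    · obtain ⟨h1, h2⟩ := (h a b).mpr ⟨hab, Or.inl hS⟩
      exact ⟨h1, h2.imp Or.inl Or.inl⟩
    · have e := theta_sub_of_mem' m n t hmn T a b hD
      refine ⟨?_, Or.inl (Or.inr (e ▸ hD))⟩
      intro hne
      exact hab (by rw [hne])
    · obtain ⟨h1, h2⟩ := (h a b).mpr ⟨hab, Or.inr hS⟩
      exact ⟨h1, h2.imp Or.inl Or.inl⟩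
    · have e := theta_sub_of_mem' m n t hmn T b a hD
      refine ⟨?_, Or.inr (Or.inr (e ▸ hD))⟩
      intro hne
      exact hab (by rw [hne])
end

section
/- Let n, s be natural numbers with n ≥ 2, 1 ≤ 2s−1 ≤ 2n−1 and n ≠ 2s−1, and set R = {2, 2s−1, 4n−(2s−1)} and S = {2, 2n−(2s−1), 2n+(2s−1)} as subsets of ZMod (8n). Then for every unit u of ZMod (8n), u·R^± ≠ S^±; that is, the circulant graphs C_{8n}(R) and C_{8n}(S) (which are isomorphic) are not Adam isomorphic, hence are Type-2 isomorphic. -/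
open SimpleGraph

private def stmtF (n : ℕ) : ZMod (8*n) → ZMod (8*n) := fun x => x + 2*(n : ZMod (8*n))*x^2
private def stmtG (n : ℕ) : ZMod (8*n) → ZMod (8*n) := fun x => x - 2*(n : ZMod (8*n))*x^2

private lemma stmt_h8 (n : ℕ) : (8 : ZMod (8*n)) * (n : ZMod (8*n)) = 0 := by
  have h := ZMod.natCast_self (8*n)
  push_cast at h
  linear_combination h

private lemma stmtGF (n : ℕ) (x : ZMod (8*n)) : stmtG n (stmtF n x) = x := by
  simp only [stmtF, stmtG]
  linear_combination (-(n:ZMod (8*n))*x^3 - (n:ZMod (8*n))^2*x^4) * stmt_h8 n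

private lemma stmtFG (n : ℕ) (x : ZMod (8*n)) : stmtF n (stmtG n x) = x := by
  simp only [stmtF, stmtG]
  linear_combination (-(n:ZMod (8*n))*x^3 + (n:ZMod (8*n))^2*x^4) * stmt_h8 n

private lemma stmt_parity (m : ℕ) [NeZero m] (x : ZMod m) :
    ∃ c : ZMod m, x = 2*c ∨ x = 2*c+1 := by
  obtain ⟨k, hk | hk⟩ := Nat.even_or_odd' x.val
  · exact ⟨(k : ZMod m), Or.inl (by rw [← ZMod.natCast_rightInverse x, hk]; push_cast; ring)⟩
  · exact ⟨(k : ZMod m), Or.inr (by rw [← ZMod.natCast_rightInverse x, hk]; push_cast; ring)⟩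

private lemma stmt_keyF (n s : ℕ) [NeZero (8*n)] (a b : ZMod (8*n))
    (hv : a - b = 2 ∨ a - b = 2*(s:ZMod (8*n)) - 1 ∨
      a - b = 4*(n:ZMod (8*n)) - (2*(s:ZMod (8*n)) - 1)) :
    ∃ w : ZMod (8*n),
      (w = 2 ∨ w = 2*(n:ZMod (8*n)) - (2*(s:ZMod (8*n)) - 1) ∨
        w = 2*(n:ZMod (8*n)) + (2*(s:ZMod (8*n)) - 1)) ∧
      (stmtF n a - stmtF n b = w ∨ stmtF n b - stmtF n a = w) := by
  have h8 := stmt_h8 n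
  set N := (n : ZMod (8*n)) with hN
  set σ := (s : ZMod (8*n)) with hσ
  obtain ⟨c, hc | hc⟩ := stmt_parity (8*n) b
  · subst hc
    rcases hv with h | h | h
    · have ha : a = 2*c + 2 := by linear_combination h
      subst ha
      refine ⟨2, Or.inl rfl, Or.inl ?_⟩
      simp only [stmtF]
      linear_combination (1 + 2*c)*h8
    · have ha : a = 2*c + (2*σ - 1) := by linear_combination h
      subst ha
      refine ⟨2*N + (2*σ - 1), Or.inr (Or.inr rfl), Or.inl ?_⟩
      simp only [stmtF]
      linear_combination (-c - σ + 2*σ*c + σ^2)*h8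
    · have ha : a = 2*c + (4*N - (2*σ - 1)) := by linear_combination h
      subst ha
      refine ⟨2*N + (2*σ - 1), Or.inr (Or.inr rfl), Or.inr ?_⟩
      simp only [stmtF]
      linear_combination (-1 - c + σ + 2*σ*c - σ^2 - 2*N - 4*N*c + 4*N*σ - 4*N^2)*h8
  · subst hc
    rcases hv with h | h | h
    · have ha : a = 2*c + 1 + 2 := by linear_combination h
      subst ha
      refine ⟨2, Or.inl rfl, Or.inl ?_⟩
      simp only [stmtF]
      linear_combination (2 + 2*c)*h8
    · have ha : a = 2*c + 1 + (2*σ - 1) := by linear_combination h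
      subst ha
      refine ⟨2*N - (2*σ - 1), Or.inr (Or.inl rfl), Or.inr ?_⟩
      simp only [stmtF]
      linear_combination (c - 2*σ*c - σ^2)*h8
    · have ha : a = 2*c + 1 + (4*N - (2*σ - 1)) := by linear_combination h
      subst ha
      refine ⟨2*N - (2*σ - 1), Or.inr (Or.inl rfl), Or.inl ?_⟩
      simp only [stmtF]
      linear_combination (1 + c - 2*σ - 2*σ*c + σ^2 + 4*N + 4*N*c - 4*N*σ + 4*N^2)*h8

private lemma stmt_keyG (n s : ℕ) [NeZero (8*n)] (a b : ZMod (8*n))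
    (hv : a - b = 2 ∨ a - b = 2*(n:ZMod (8*n)) - (2*(s:ZMod (8*n)) - 1) ∨
      a - b = 2*(n:ZMod (8*n)) + (2*(s:ZMod (8*n)) - 1)) :
    ∃ w : ZMod (8*n),
      (w = 2 ∨ w = 2*(s:ZMod (8*n)) - 1 ∨
        w = 4*(n:ZMod (8*n)) - (2*(s:ZMod (8*n)) - 1)) ∧
      (stmtG n a - stmtG n b = w ∨ stmtG n b - stmtG n a = w) := by
  have h8 := stmt_h8 n
  set N := (n : ZMod (8*n)) with hN
  set σ := (s : ZMod (8*n)) with hσ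
  obtain ⟨c, hc | hc⟩ := stmt_parity (8*n) b
  · subst hc
    rcases hv with h | h | h
    · have ha : a = 2*c + 2 := by linear_combination h
      subst ha
      refine ⟨2, Or.inl rfl, Or.inl ?_⟩
      simp only [stmtG]
      linear_combination (-1 - 2*c)*h8
    · have ha : a = 2*c + (2*N - (2*σ - 1)) := by linear_combination h
      subst ha
      refine ⟨2*σ - 1, Or.inr (Or.inl rfl), Or.inr ?_⟩
      simp only [stmtG]
      linear_combination (c - σ - 2*σ*c + σ^2 + N + 2*N*c - 2*N*σ + N^2)*h8
    · have ha : a = 2*c + (2*N + (2*σ - 1)) := by linear_combination h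
      subst ha
      refine ⟨2*σ - 1, Or.inr (Or.inl rfl), Or.inl ?_⟩
      simp only [stmtG]
      linear_combination (c + σ - 2*σ*c - σ^2 + N - 2*N*c - 2*N*σ - N^2)*h8
  · subst hc
    rcases hv with h | h | h
    · have ha : a = 2*c + 1 + 2 := by linear_combination h
      subst ha
      refine ⟨2, Or.inl rfl, Or.inl ?_⟩
      simp only [stmtG]
      linear_combination (-2 - 2*c)*h8
    · have ha : a = 2*c + 1 + (2*N - (2*σ - 1)) := by linear_combination h
      subst ha
      refine ⟨4*N - (2*σ - 1), Or.inr (Or.inr rfl), Or.inl ?_⟩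
      simp only [stmtG]
      linear_combination (-1 - c + 2*σ + 2*σ*c - σ^2 - 2*N - 2*N*c + 2*N*σ - N^2)*h8
    · have ha : a = 2*c + 1 + (2*N + (2*σ - 1)) := by linear_combination h
      subst ha
      refine ⟨4*N - (2*σ - 1), Or.inr (Or.inr rfl), Or.inr ?_⟩
      simp only [stmtG]
      linear_combination (-1 - c + 2*σ*c + σ^2 + 2*N*c + 2*N*σ + N^2)*h8

private lemma int_bound_cases (M Z : ℤ) (hM : 0 < M) (hd : M ∣ Z) (hb1 : -(2*M) < Z)
    (hb2 : Z ≤ 2*M) : Z = -M ∨ Z = 0 ∨ Z = M ∨ Z = 2*M := by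
  obtain ⟨k, rfl⟩ := hd
  have hk : k = -1 ∨ k = 0 ∨ k = 1 ∨ k = 2 := by
    by_contra hcon
    push_neg at hcon
    obtain ⟨e1, e2, e3, e4⟩ := hcon
    rcases lt_or_ge k 0 with h | h
    · have h' : k ≤ -2 := by omega
      nlinarith
    · have h' : 3 ≤ k := by omega
      nlinarith
  rcases hk with rfl | rfl | rfl | rfl
  · left; ring
  · right; left; ring
  · right; right; left; ring
  · right; right; right; ring

private lemma stmt_hAu (n uv : ℕ) (s : ℕ) (Y : ℤ) (hn : 2 ≤ n) (huvlt : uv < 8*n)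
    (hY : Y = 2 ∨ Y = -2 ∨ Y = 2*(n:ℤ) - (2*(s:ℤ)-1) ∨ Y = -(2*(n:ℤ) - (2*(s:ℤ)-1))
        ∨ Y = 2*(n:ℤ) + (2*(s:ℤ)-1) ∨ Y = -(2*(n:ℤ) + (2*(s:ℤ)-1)))
    (hdvd : (8*(n:ℤ)) ∣ (2*(uv:ℤ) - Y)) :
    (uv:ℤ) = 1 ∨ (uv:ℤ) = 4*(n:ℤ)+1 ∨ (uv:ℤ) = 4*(n:ℤ)-1 ∨ (uv:ℤ) = 8*(n:ℤ)-1 := by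
  have h2Z : (2:ℤ) ∣ (2*(uv:ℤ) - Y) := dvd_trans ⟨4*(n:ℤ), by ring⟩ hdvd
  rcases hY with rfl | rfl | rfl | rfl | rfl | rfl
  · have h4 : (4*(n:ℤ)) ∣ ((uv:ℤ) - 1) := by
      obtain ⟨k, hk⟩ := hdvd
      exact ⟨k, by linarith⟩
    have tri := int_bound_cases (4*(n:ℤ)) _ (by omega) h4 (by omega) (by omega)
    omega
  · have h4 : (4*(n:ℤ)) ∣ ((uv:ℤ) + 1) := by
      obtain ⟨k, hk⟩ := hdvd
      exact ⟨k, by linarith⟩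
    have tri := int_bound_cases (4*(n:ℤ)) _ (by omega) h4 (by omega) (by omega)
    omega
  all_goals omega

private lemma stmt_final (n s : ℕ) (X Y : ℤ) (hn : 2 ≤ n) (h1 : 1 ≤ 2*s-1)
    (h2 : 2*s-1 ≤ 2*n-1) (hne : n ≠ 2*s-1)
    (hX : X = 2*(s:ℤ)-1 ∨ X = -(2*(s:ℤ)-1) ∨ X = 4*(n:ℤ)+(2*(s:ℤ)-1) ∨ X = 4*(n:ℤ)-(2*(s:ℤ)-1))
    (hY : Y = 2 ∨ Y = -2 ∨ Y = 2*(n:ℤ) - (2*(s:ℤ)-1) ∨ Y = -(2*(n:ℤ) - (2*(s:ℤ)-1))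
        ∨ Y = 2*(n:ℤ) + (2*(s:ℤ)-1) ∨ Y = -(2*(n:ℤ) + (2*(s:ℤ)-1)))
    (hdvd : (8*(n:ℤ)) ∣ (X - Y)) : False := by
  have h2Z : (2:ℤ) ∣ (X - Y) := dvd_trans ⟨4*(n:ℤ), by ring⟩ hdvd
  rcases hX with rfl|rfl|rfl|rfl <;> rcases hY with rfl|rfl|rfl|rfl|rfl|rfl <;>
    (have tri := int_bound_cases (8*(n:ℤ)) _ (by omega) hdvd (by omega) (by omega); omega)

set_option maxHeartbeats 3200000 in
/-- For `n ≥ 2`, `1 ≤ 2s−1 ≤ 2n−1` and `n ≠ 2s−1`, the isomorphic circulant graphs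
`C_{8n}(R)` and `C_{8n}(S)`, with `R = {2, 2s−1, 4n−(2s−1)}` and
`S = {2, 2n−(2s−1), 2n+(2s−1)}`, satisfy `u·R^± ≠ S^±` for every unit `u` of `ZMod (8n)`:
they are not Adam isomorphic, hence Type-2 isomorphic. -/
theorem stmt_12 (n s : ℕ) (hn : 2 ≤ n) (h1 : 1 ≤ 2 * s - 1) (h2 : 2 * s - 1 ≤ 2 * n - 1)
    (hne : n ≠ 2 * s - 1) :
    let R : Set (ZMod (8 * n)) :=
      {2, ((2 * s - 1 : ℕ) : ZMod (8 * n)), ((4 * n - (2 * s - 1) : ℕ) : ZMod (8 * n))}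
    let S : Set (ZMod (8 * n)) :=
      {2, ((2 * n - (2 * s - 1) : ℕ) : ZMod (8 * n)),
        ((2 * n + (2 * s - 1) : ℕ) : ZMod (8 * n))}
    Nonempty (circulantGraph R ≃g circulantGraph S) ∧
    ∀ u : (ZMod (8 * n))ˣ,
      (fun r => (u : ZMod (8 * n)) * r) '' (R ∪ -R) ≠ S ∪ -S := by
  intro R S
  have hs1 : 1 ≤ s := by omega
  haveI : NeZero (8 * n) := ⟨by omega⟩
  have hRdef : R = {2, ((2 * s - 1 : ℕ) : ZMod (8 * n)),
      ((4 * n - (2 * s - 1) : ℕ) : ZMod (8 * n))} := rfl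
  have hSdef : S = {2, ((2 * n - (2 * s - 1) : ℕ) : ZMod (8 * n)),
      ((2 * n + (2 * s - 1) : ℕ) : ZMod (8 * n))} := rfl
  have cA : ((2*s-1 : ℕ) : ZMod (8*n)) = 2*(s : ZMod (8*n)) - 1 := by
    have h : (2*s-1 : ℕ) + 1 = 2*s := by omega
    have h' := congrArg (fun t : ℕ => (t : ZMod (8*n))) h
    push_cast at h'
    linear_combination h'
  have cB : ((4*n-(2*s-1) : ℕ) : ZMod (8*n))
      = 4*(n:ZMod (8*n)) - (2*(s:ZMod (8*n)) - 1) := by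
    rw [Nat.cast_sub (by omega : 2*s-1 ≤ 4*n), cA]
    push_cast
    ring
  have cC : ((2*n-(2*s-1) : ℕ) : ZMod (8*n))
      = 2*(n:ZMod (8*n)) - (2*(s:ZMod (8*n)) - 1) := by
    rw [Nat.cast_sub (by omega : 2*s-1 ≤ 2*n), cA]
    push_cast
    ring
  have cD : ((2*n+(2*s-1) : ℕ) : ZMod (8*n))
      = 2*(n:ZMod (8*n)) + (2*(s:ZMod (8*n)) - 1) := by
    rw [Nat.cast_add, cA]
    push_cast
    ring
  constructor
  · refine ⟨⟨⟨stmtF n, stmtG n, stmtGF n, stmtFG n⟩, ?_⟩⟩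
    intro a b
    simp only [circulantGraph_adj, Equiv.coe_fn_mk, hSdef, hRdef, Set.mem_insert_iff,
      Set.mem_singleton_iff, cA, cB, cC, cD, eq_iff_iff]
    constructor
    · rintro ⟨hab, hmem⟩
      refine ⟨fun h => hab (by rw [h]), ?_⟩
      rcases hmem with h | h
      · obtain ⟨w, hw, hrel⟩ := stmt_keyG n s (stmtF n a) (stmtF n b) h
        rw [stmtGF n a, stmtGF n b] at hrel
        rcases hw with rfl | rfl | rfl <;> tauto
      · obtain ⟨w, hw, hrel⟩ := stmt_keyG n s (stmtF n b) (stmtF n a) h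
        rw [stmtGF n a, stmtGF n b] at hrel
        rcases hw with rfl | rfl | rfl <;> tauto
    · rintro ⟨hab, hmem⟩
      refine ⟨fun h => hab (by rw [← stmtGF n a, ← stmtGF n b, h]), ?_⟩
      rcases hmem with h | h
      · obtain ⟨w, hw, hrel⟩ := stmt_keyF n s a b h
        rcases hw with rfl | rfl | rfl <;> tauto
      · obtain ⟨w, hw, hrel⟩ := stmt_keyF n s b a h
        rcases hw with rfl | rfl | rfl <;> tauto
  · intro u heq
    set uv := ZMod.val (u : ZMod (8*n)) with huvdef
    have hu : ((uv : ℕ) : ZMod (8*n)) = (u : ZMod (8*n)) := ZMod.natCast_rightInverse _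
    have huvlt : uv < 8*n := ZMod.val_lt _
    have toInt : ∀ A B : ℤ, ((A : ZMod (8*n)) = (B : ZMod (8*n))) → (8*(n:ℤ)) ∣ (A - B) := by
      intro A B h
      have h' := (ZMod.intCast_eq_intCast_iff A B (8*n)).mp h
      have h2' := Int.ModEq.dvd h'
      have hcast : ((8*n : ℕ) : ℤ) = 8*(n:ℤ) := by push_cast; ring
      rw [hcast] at h2'
      obtain ⟨k, hk⟩ := h2'
      exact ⟨-k, by linarith⟩
    have mA : (u : ZMod (8*n)) * 2 ∈ S ∪ -S := by
      rw [← heq]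
      exact ⟨2, Set.mem_union_left _ (by rw [hRdef]; exact Set.mem_insert _ _), rfl⟩
    have mB : (u : ZMod (8*n)) * ((2*s-1 : ℕ) : ZMod (8*n)) ∈ S ∪ -S := by
      rw [← heq]
      refine ⟨((2*s-1 : ℕ) : ZMod (8*n)), Set.mem_union_left _ ?_, rfl⟩
      rw [hRdef]
      exact Set.mem_insert_of_mem _ (Set.mem_insert _ _)
    rw [← hu] at mA mB
    rw [cA] at mB
    simp only [hSdef, Set.mem_union, Set.mem_insert_iff, Set.mem_singleton_iff, Set.mem_neg,
      cC, cD] at mA mB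
    have mA6 : ∃ Y : ℤ, (Y = 2 ∨ Y = -2 ∨ Y = 2*(n:ℤ) - (2*(s:ℤ)-1)
        ∨ Y = -(2*(n:ℤ) - (2*(s:ℤ)-1))
        ∨ Y = 2*(n:ℤ) + (2*(s:ℤ)-1) ∨ Y = -(2*(n:ℤ) + (2*(s:ℤ)-1))) ∧
        (((2*(uv:ℤ) : ℤ) : ZMod (8*n)) = ((Y : ℤ) : ZMod (8*n))) := by
      rcases mA with (h | h | h) | (h | h | h)
      · exact ⟨2, Or.inl rfl, by push_cast; linear_combination h⟩
      · exact ⟨2*(n:ℤ) - (2*(s:ℤ)-1), Or.inr (Or.inr (Or.inl rfl)), by push_cast; linear_combination h⟩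
      · exact ⟨2*(n:ℤ) + (2*(s:ℤ)-1), Or.inr (Or.inr (Or.inr (Or.inr (Or.inl rfl)))), by push_cast; linear_combination h⟩
      · exact ⟨-2, Or.inr (Or.inl rfl), by push_cast; linear_combination -h⟩
      · exact ⟨-(2*(n:ℤ) - (2*(s:ℤ)-1)), Or.inr (Or.inr (Or.inr (Or.inl rfl))), by push_cast; linear_combination -h⟩
      · exact ⟨-(2*(n:ℤ) + (2*(s:ℤ)-1)), Or.inr (Or.inr (Or.inr (Or.inr (Or.inr rfl)))), by push_cast; linear_combination -h⟩
    have mB6 : ∃ Y : ℤ, (Y = 2 ∨ Y = -2 ∨ Y = 2*(n:ℤ) - (2*(s:ℤ)-1)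
        ∨ Y = -(2*(n:ℤ) - (2*(s:ℤ)-1))
        ∨ Y = 2*(n:ℤ) + (2*(s:ℤ)-1) ∨ Y = -(2*(n:ℤ) + (2*(s:ℤ)-1))) ∧
        ((((uv:ℤ)*(2*(s:ℤ)-1) : ℤ) : ZMod (8*n)) = ((Y : ℤ) : ZMod (8*n))) := by
      rcases mB with (h | h | h) | (h | h | h)
      · exact ⟨2, Or.inl rfl, by push_cast; linear_combination h⟩
      · exact ⟨2*(n:ℤ) - (2*(s:ℤ)-1), Or.inr (Or.inr (Or.inl rfl)), by push_cast; linear_combination h⟩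
      · exact ⟨2*(n:ℤ) + (2*(s:ℤ)-1), Or.inr (Or.inr (Or.inr (Or.inr (Or.inl rfl)))), by push_cast; linear_combination h⟩
      · exact ⟨-2, Or.inr (Or.inl rfl), by push_cast; linear_combination -h⟩
      · exact ⟨-(2*(n:ℤ) - (2*(s:ℤ)-1)), Or.inr (Or.inr (Or.inr (Or.inl rfl))), by push_cast; linear_combination -h⟩
      · exact ⟨-(2*(n:ℤ) + (2*(s:ℤ)-1)), Or.inr (Or.inr (Or.inr (Or.inr (Or.inr rfl)))), by push_cast; linear_combination -h⟩
    have hAu : (uv:ℤ) = 1 ∨ (uv:ℤ) = 4*(n:ℤ)+1 ∨ (uv:ℤ) = 4*(n:ℤ)-1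
        ∨ (uv:ℤ) = 8*(n:ℤ)-1 := by
      obtain ⟨Y, hY, hYe⟩ := mA6
      exact stmt_hAu n uv s Y hn huvlt hY (toInt _ _ hYe)
    have hud4 : ∃ X : ℤ, (X = 2*(s:ℤ)-1 ∨ X = -(2*(s:ℤ)-1) ∨ X = 4*(n:ℤ)+(2*(s:ℤ)-1)
        ∨ X = 4*(n:ℤ)-(2*(s:ℤ)-1)) ∧
        ((((uv:ℤ)*(2*(s:ℤ)-1) : ℤ) : ZMod (8*n)) = ((X : ℤ) : ZMod (8*n))) := by
      rcases hAu with h | h | h | h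
      · exact ⟨2*(s:ℤ)-1, Or.inl rfl, by rw [h]; push_cast; ring⟩
      · exact ⟨4*(n:ℤ)+(2*(s:ℤ)-1), Or.inr (Or.inr (Or.inl rfl)), by
          rw [h]; push_cast; linear_combination ((s:ZMod (8*n)) - 1) * stmt_h8 n⟩
      · exact ⟨4*(n:ℤ)-(2*(s:ℤ)-1), Or.inr (Or.inr (Or.inr rfl)), by
          rw [h]; push_cast; linear_combination ((s:ZMod (8*n)) - 1) * stmt_h8 n⟩
      · exact ⟨-(2*(s:ℤ)-1), Or.inr (Or.inl rfl), by
          rw [h]; push_cast; linear_combination (2*(s:ZMod (8*n)) - 1) * stmt_h8 n⟩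
    obtain ⟨X, hX, hXe⟩ := hud4
    obtain ⟨Y, hY, hYe⟩ := mB6
    exact stmt_final n s X Y hn h1 h2 hne hX hY (toInt X Y (hXe.symm.trans hYe))
end

section
/- Let p be an odd prime, n ≥ 1, and let x, y be natural numbers with 1 ≤ x ≤ p−1 and 0 ≤ y ≤ n·p−1. For 1 ≤ i ≤ p put d_i = (i−1)·x·p·n + x + y·p, and let R_i ⊆ ZMod (n·p³) be the set {p, −p} ∪ {k·n·p² + d_i : 0 ≤ k ≤ p−1} ∪ {k·n·p² − d_i : 0 ≤ k ≤ p−1}, all elements taken in ZMod (n·p³). For 1 ≤ j ≤ p define θ_j : ZMod (n·p³) → ZMod (n·p³) by θ_j(z) = z + p·j·n·r(z), where r(z) ∈ {0, …, p−1} is the value of the image of z under the canonical ring homomorphism ZMod (n·p³) → ZMod p. Then for all 1 ≤ i, j ≤ p, θ_j is a bijection and a graph isomorphism from C_{np³}(R_i) onto C_{np³}(R_{i'}), where i' is the unique index in {1, …, p} with i' ≡ i + j (mod p). -/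
open SimpleGraph

/-- `dNum p n x y i = (i−1)·x·p·n + x + y·p`. -/
def dNum (p n x y i : ℕ) : ℕ := (i - 1) * x * p * n + x + y * p

/-- The connection set
`R_i = {p, −p} ∪ {k·n·p² + d_i : 0 ≤ k ≤ p−1} ∪ {k·n·p² − d_i : 0 ≤ k ≤ p−1}`
inside `ZMod (n·p³)`. -/
def Rset (p n x y i : ℕ) : Set (ZMod (n * p ^ 3)) :=
  {(p : ZMod (n * p ^ 3)), -(p : ZMod (n * p ^ 3))} ∪
  {z | ∃ k : ℕ, k ≤ p - 1 ∧
    z = ((k * n * p ^ 2 : ℕ) : ZMod (n * p ^ 3)) + ((dNum p n x y i : ℕ) : ZMod (n * p ^ 3))} ∪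
  {z | ∃ k : ℕ, k ≤ p - 1 ∧
    z = ((k * n * p ^ 2 : ℕ) : ZMod (n * p ^ 3)) - ((dNum p n x y i : ℕ) : ZMod (n * p ^ 3))}

/-- The map `θ_j(z) = z + p·j·n·r(z)` on `ZMod (n·p³)`, where `r(z)` is the residue of `z`
modulo `p`. -/
def thetaJ (p n j : ℕ) (z : ZMod (n * p ^ 3)) : ZMod (n * p ^ 3) :=
  z + (p : ZMod (n * p ^ 3)) * (j : ZMod (n * p ^ 3)) * (n : ZMod (n * p ^ 3)) *
    ((ZMod.castHom (show p ∣ n * p ^ 3 from ⟨n * p ^ 2, by ring⟩) (ZMod p) z).val :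
      ZMod (n * p ^ 3))

/-- residue of `z` modulo `p`, as a natural number. -/
def resid (p n : ℕ) (z : ZMod (n * p ^ 3)) : ℕ :=
  (ZMod.castHom (show p ∣ n * p ^ 3 from ⟨n * p ^ 2, by ring⟩) (ZMod p) z).val

lemma thetaJ_def (p n j : ℕ) (z : ZMod (n * p ^ 3)) :
    thetaJ p n j z = z + (p : ZMod (n * p ^ 3)) * (j : ZMod (n * p ^ 3)) *
      (n : ZMod (n * p ^ 3)) * ((resid p n z : ℕ) : ZMod (n * p ^ 3)) := rfl

lemma hNp3 (p n : ℕ) : (n : ZMod (n * p ^ 3)) * (p : ZMod (n * p ^ 3)) ^ 3 = 0 := by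
  have h : ((n * p ^ 3 : ℕ) : ZMod (n * p ^ 3)) = 0 := ZMod.natCast_self _
  push_cast at h
  exact h

lemma resid_theta (p n j : ℕ) (z : ZMod (n * p ^ 3)) :
    resid p n (thetaJ p n j z) = resid p n z := by
  unfold resid thetaJ
  congr 1
  rw [map_add, map_mul, map_mul, map_mul, map_natCast, ZMod.natCast_self]
  simp

lemma theta_theta (p n j j' c : ℕ) (h : j + j' = c * p ^ 2) (z : ZMod (n * p ^ 3)) :
    thetaJ p n j' (thetaJ p n j z) = z := by
  rw [thetaJ_def, resid_theta, thetaJ_def]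
  have hh : ((j : ZMod (n * p ^ 3)) + j') = (c : ZMod (n * p ^ 3)) * (p : ZMod (n * p ^ 3)) ^ 2 := by
    have := congrArg (Nat.cast : ℕ → ZMod (n * p ^ 3)) h
    push_cast at this
    exact this
  have h0 := hNp3 p n
  linear_combination ((p : ZMod (n * p ^ 3)) * n * (resid p n z : ZMod (n * p ^ 3))) * hh +
    ((c : ZMod (n * p ^ 3)) * (resid p n z : ZMod (n * p ^ 3))) * h0

lemma resid_cast (p : ℕ) [NeZero p] (n : ℕ) (z : ZMod (n * p ^ 3)) :
    ((resid p n z : ℕ) : ZMod p) =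
      ZMod.castHom (show p ∣ n * p ^ 3 from ⟨n * p ^ 2, by ring⟩) (ZMod p) z :=
  ZMod.natCast_rightInverse _

lemma theta_sub (p n j : ℕ) (a b : ZMod (n * p ^ 3)) :
    thetaJ p n j a - thetaJ p n j b = (a - b) +
      (p : ZMod (n * p ^ 3)) * (j : ZMod (n * p ^ 3)) * (n : ZMod (n * p ^ 3)) *
        (((resid p n a : ℤ) - (resid p n b : ℤ) : ℤ) : ZMod (n * p ^ 3)) := by
  rw [thetaJ_def, thetaJ_def]
  push_cast
  ring

lemma mem_map (p n x y : ℕ) (hp : p.Prime) {i i' j : ℕ} (hi : 1 ≤ i) (hi' : 1 ≤ i')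
    (hmod : (i' : ZMod p) = ((i + j : ℕ) : ZMod p)) {a b : ZMod (n * p ^ 3)}
    (hab : a - b ∈ Rset p n x y i) :
    thetaJ p n j a - thetaJ p n j b ∈ Rset p n x y i' := by
  haveI : NeZero p := ⟨hp.pos.ne'⟩
  have hφ : ((((resid p n a : ℤ) - (resid p n b : ℤ)) : ℤ) : ZMod p) =
      ZMod.castHom (show p ∣ n * p ^ 3 from ⟨n * p ^ 2, by ring⟩) (ZMod p) (a - b) := by
    rw [map_sub]
    push_cast
    rw [resid_cast, resid_cast]
  push_cast at hmod
  obtain ⟨t, ht⟩ : (p : ℤ) ∣ ((i : ℤ) + j - i') := by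
    rw [← ZMod.intCast_zmod_eq_zero_iff_dvd]
    push_cast
    rw [← hmod]
    ring
  have hdiff := theta_sub p n j a b
  have hba : (resid p n a : ℤ) < p := by exact_mod_cast ZMod.val_lt _
  have hbb : (resid p n b : ℤ) < p := by exact_mod_cast ZMod.val_lt _
  have hba0 : (0 : ℤ) ≤ (resid p n a : ℤ) := Int.natCast_nonneg _
  have hbb0 : (0 : ℤ) ≤ (resid p n b : ℤ) := Int.natCast_nonneg _
  obtain ⟨i₀, rfl⟩ := Nat.exists_eq_add_of_le hi
  obtain ⟨i₀', rfl⟩ := Nat.exists_eq_add_of_le hi'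
  have hdx : ((dNum p n x y (1 + i₀) : ℕ) : ZMod p) = (x : ZMod p) := by
    unfold dNum
    push_cast
    simp [ZMod.natCast_self]
  have hppos : (0 : ℤ) < p := by exact_mod_cast hp.pos
  rcases hab with (h1 | ⟨k, hk, hk2⟩) | ⟨k, hk, hk2⟩
  · -- {p, -p} case : residues agree
    have hres0 : (resid p n a : ℤ) - (resid p n b : ℤ) = 0 := by
      apply Int.eq_zero_of_abs_lt_dvd
      · rw [← ZMod.intCast_zmod_eq_zero_iff_dvd, hφ]
        rcases h1 with h1 | h1
        · rw [h1, map_natCast, ZMod.natCast_self]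
        · rw [Set.mem_singleton_iff] at h1
          rw [h1, map_neg, map_natCast, ZMod.natCast_self, neg_zero]
      · rw [abs_lt]; constructor <;> linarith
    left; left
    rw [hdiff, hres0]
    simpa using h1
  · -- the + d case
    obtain ⟨m, hm⟩ : (p : ℤ) ∣ ((resid p n a : ℤ) - (resid p n b : ℤ) - x) := by
      rw [← ZMod.intCast_zmod_eq_zero_iff_dvd]
      have h2 : ((((resid p n a : ℤ) - (resid p n b : ℤ)) : ℤ) : ZMod p) = (x : ZMod p) := by
        rw [hφ, hk2, map_add, map_natCast, map_natCast, hdx]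
        push_cast
        simp [ZMod.natCast_self]
      push_cast at h2 ⊢
      linear_combination h2
    have hm' : (resid p n a : ℤ) - (resid p n b : ℤ) = x + p * m := by linarith
    obtain ⟨s, hs⟩ : ∃ s : ℤ, ((k : ℤ) + j * m + t * x) - ((((k : ℤ) + j * m + t * x) % p).toNat : ℤ) = p * s :=
      ⟨((k : ℤ) + j * m + t * x) / p,
        by rw [Int.toNat_of_nonneg (Int.emod_nonneg _ hppos.ne'), Int.emod_def]; ring⟩
    have hk'lt : (((k : ℤ) + j * m + t * x) % p).toNat < p := by
      have h1 := Int.emod_lt_of_pos ((k : ℤ) + j * m + t * x) hppos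
      have h2 := Int.emod_nonneg ((k : ℤ) + j * m + t * x) hppos.ne'
      omega
    left; right
    refine ⟨(((k : ℤ) + j * m + t * x) % p).toNat, by omega, ?_⟩
    rw [hdiff, hk2, hm']
    have htN := congrArg (Int.cast : ℤ → ZMod (n * p ^ 3)) ht
    have hsN := congrArg (Int.cast : ℤ → ZMod (n * p ^ 3)) hs
    push_cast at htN hsN
    have h0 := hNp3 p n
    unfold dNum
    simp only [Nat.add_sub_cancel_left]
    push_cast
    linear_combination ((n : ZMod (n * p ^ 3)) * (p : ZMod (n * p ^ 3)) ^ 2) * hsN +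
      ((x : ZMod (n * p ^ 3)) * (p : ZMod (n * p ^ 3)) * (n : ZMod (n * p ^ 3))) * htN +
      ((s : ℤ) : ZMod (n * p ^ 3)) * h0
  · -- the - d case
    obtain ⟨m, hm⟩ : (p : ℤ) ∣ ((resid p n a : ℤ) - (resid p n b : ℤ) + x) := by
      rw [← ZMod.intCast_zmod_eq_zero_iff_dvd]
      have h2 : ((((resid p n a : ℤ) - (resid p n b : ℤ)) : ℤ) : ZMod p) = -(x : ZMod p) := by
        rw [hφ, hk2, map_sub, map_natCast, map_natCast, hdx]
        push_cast
        simp [ZMod.natCast_self]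
      push_cast at h2 ⊢
      linear_combination h2
    have hm' : (resid p n a : ℤ) - (resid p n b : ℤ) = -(x : ℤ) + p * m := by linarith
    obtain ⟨s, hs⟩ : ∃ s : ℤ, ((k : ℤ) + j * m - t * x) - ((((k : ℤ) + j * m - t * x) % p).toNat : ℤ) = p * s :=
      ⟨((k : ℤ) + j * m - t * x) / p,
        by rw [Int.toNat_of_nonneg (Int.emod_nonneg _ hppos.ne'), Int.emod_def]; ring⟩
    have hk'lt : (((k : ℤ) + j * m - t * x) % p).toNat < p := by
      have h1 := Int.emod_lt_of_pos ((k : ℤ) + j * m - t * x) hppos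
      have h2 := Int.emod_nonneg ((k : ℤ) + j * m - t * x) hppos.ne'
      omega
    right
    refine ⟨(((k : ℤ) + j * m - t * x) % p).toNat, by omega, ?_⟩
    rw [hdiff, hk2, hm']
    have htN := congrArg (Int.cast : ℤ → ZMod (n * p ^ 3)) ht
    have hsN := congrArg (Int.cast : ℤ → ZMod (n * p ^ 3)) hs
    push_cast at htN hsN
    have h0 := hNp3 p n
    unfold dNum
    simp only [Nat.add_sub_cancel_left]
    push_cast
    linear_combination ((n : ZMod (n * p ^ 3)) * (p : ZMod (n * p ^ 3)) ^ 2) * hsN -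
      ((x : ZMod (n * p ^ 3)) * (p : ZMod (n * p ^ 3)) * (n : ZMod (n * p ^ 3))) * htN +
      ((s : ℤ) : ZMod (n * p ^ 3)) * h0

/-- For an odd prime `p`, `n ≥ 1`, `1 ≤ x ≤ p−1`, `0 ≤ y ≤ np−1` and indices
`1 ≤ i, j, i' ≤ p` with `i' ≡ i + j (mod p)`, the map `θ_j` is a bijection and a graph
isomorphism from `C_{np³}(R_i)` onto `C_{np³}(R_{i'})`. -/
theorem stmt_13 (p n x y : ℕ) (hp : p.Prime) (hodd : Odd p) (hn : 1 ≤ n)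
    (hx1 : 1 ≤ x) (hx2 : x ≤ p - 1) (hy : y ≤ n * p - 1) :
    ∀ i j i' : ℕ, 1 ≤ i → i ≤ p → 1 ≤ j → j ≤ p → 1 ≤ i' → i' ≤ p →
      (i' : ZMod p) = ((i + j : ℕ) : ZMod p) →
      Function.Bijective (thetaJ p n j) ∧
      ∀ a b : ZMod (n * p ^ 3),
        (circulantGraph (Rset p n x y i)).Adj a b ↔
          (circulantGraph (Rset p n x y i')).Adj (thetaJ p n j a) (thetaJ p n j b) := by
  intro i j i' hi1 hip hj1 hjp hi'1 hi'p hmod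
  haveI : NeZero p := ⟨hp.pos.ne'⟩
  have hjle : j ≤ 2 * p ^ 2 := le_trans hjp (by nlinarith [hp.one_lt])
  have hsum1 : j + (2 * p ^ 2 - j) = 2 * p ^ 2 := by omega
  have hsum2 : (2 * p ^ 2 - j) + j = 2 * p ^ 2 := by omega
  have hinv1 : ∀ z, thetaJ p n (2 * p ^ 2 - j) (thetaJ p n j z) = z :=
    fun z => theta_theta p n j (2 * p ^ 2 - j) 2 hsum1 z
  have hinv2 : ∀ z, thetaJ p n j (thetaJ p n (2 * p ^ 2 - j) z) = z :=
    fun z => theta_theta p n (2 * p ^ 2 - j) j 2 hsum2 z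
  have hbij : Function.Bijective (thetaJ p n j) :=
    Function.bijective_iff_has_inverse.mpr ⟨_, hinv1, hinv2⟩
  have hmod' : (i : ZMod p) = ((i' + (2 * p ^ 2 - j) : ℕ) : ZMod p) := by
    push_cast [Nat.cast_sub hjle, hmod]
    simp [ZMod.natCast_self]
  refine ⟨hbij, fun a b => ?_⟩
  rw [circulantGraph, circulantGraph, fromRel_adj, fromRel_adj]
  constructor
  · rintro ⟨hne, hmem⟩
    refine ⟨fun hEq => hne (hbij.1 hEq), ?_⟩
    rcases hmem with h1 | h1
    · exact Or.inl (mem_map p n x y hp hi1 hi'1 hmod h1)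
    · exact Or.inr (mem_map p n x y hp hi1 hi'1 hmod h1)
  · rintro ⟨hne, hmem⟩
    refine ⟨fun hEq => hne (congrArg _ hEq), ?_⟩
    rcases hmem with h1 | h1
    · have := mem_map p n x y hp hi'1 hi1 hmod' h1
      rw [hinv1, hinv1] at this
      exact Or.inl this
    · have := mem_map p n x y hp hi'1 hi1 hmod' h1
      rw [hinv1, hinv1] at this
      exact Or.inr this
end

section
/- Let p be an odd prime, n ≥ 1, and let x, y be natural numbers with 1 ≤ x ≤ p−1 and 0 ≤ y ≤ n·p−1. For 1 ≤ i ≤ p put d_i = (i−1)·x·p·n + x + y·p, and let R_i ⊆ ZMod (n·p³) be the set {p, −p} ∪ {k·n·p² + d_i : 0 ≤ k ≤ p−1} ∪ {k·n·p² − d_i : 0 ≤ k ≤ p−1}, all elements taken in ZMod (n·p³). Then the p circulant graphs C_{np³}(R_1), …, C_{np³}(R_p) are pairwise isomorphic. -/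
open SimpleGraph

namespace Stmt14Aux

/-- reduction map `ZMod (n p³) → ZMod p`, as a natural number. -/
noncomputable def rr (p n : ℕ) (v : ZMod (n * p ^ 3)) : ℕ :=
  (ZMod.castHom (show p ∣ n * p ^ 3 from ⟨n * p ^ 2, by ring⟩) (ZMod p) v).val

/-- The isomorphism map: `v ↦ v + s·n·p·(v mod p)`. -/
noncomputable def Fm (p n s : ℕ) (v : ZMod (n * p ^ 3)) : ZMod (n * p ^ 3) :=
  v + ((s * n * p : ℕ) : ZMod (n * p ^ 3)) * ((rr p n v : ℕ) : ZMod (n * p ^ 3))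

lemma cast_rr (p n : ℕ) [NeZero p] (v : ZMod (n * p ^ 3)) :
    ((rr p n v : ℕ) : ZMod p)
      = ZMod.castHom (show p ∣ n * p ^ 3 from ⟨n * p ^ 2, by ring⟩) (ZMod p) v := by
  simp [rr, ZMod.natCast_val, ZMod.cast_id]

lemma rr_lt (p n : ℕ) [NeZero p] (v : ZMod (n * p ^ 3)) : rr p n v < p :=
  ZMod.val_lt _

lemma rr_Fm (p n s : ℕ) [NeZero p] (v : ZMod (n * p ^ 3)) :
    rr p n (Fm p n s v) = rr p n v := by
  unfold rr Fm
  rw [map_add, map_mul, map_natCast, map_natCast]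
  have h : ((s * n * p : ℕ) : ZMod p) = 0 := by
    push_cast
    rw [ZMod.natCast_self]
    ring
  rw [h, zero_mul, add_zero]

lemma Fm_inv (p n s s' : ℕ) [NeZero p] (hss : s + s' = 2 * p ^ 2) (v : ZMod (n * p ^ 3)) :
    Fm p n s' (Fm p n s v) = v := by
  have h : ((s * n * p : ℕ) : ZMod (n * p ^ 3)) + ((s' * n * p : ℕ) : ZMod (n * p ^ 3)) = 0 := by
    have h1 : s * n * p + s' * n * p = 2 * (n * p ^ 3) := by
      have : s * n * p + s' * n * p = (s + s') * n * p := by ring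
      rw [this, hss]; ring
    rw [← Nat.cast_add, h1, Nat.cast_mul, ZMod.natCast_self, mul_zero]
  conv_lhs => rw [Fm, rr_Fm]
  rw [Fm]
  ring_nf
  ring_nf at h
  linear_combination ((rr p n v : ZMod (n * p ^ 3))) * h


lemma Fm_sub (p n s : ℕ) (v w : ZMod (n * p ^ 3)) :
    Fm p n s v - Fm p n s w
      = (v - w) + ((s * n * p : ℕ) : ZMod (n * p ^ 3)) *
          (((rr p n v : ℕ) : ZMod (n * p ^ 3)) - ((rr p n w : ℕ) : ZMod (n * p ^ 3))) := by
  unfold Fm; ring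

lemma key (p n x y i i' s m : ℕ) (hp : p.Prime)
    (hi : 1 ≤ i) (hi' : 1 ≤ i')
    (hm : i - 1 + s = (i' - 1) + p * m)
    (v w : ZMod (n * p ^ 3)) (hvw : v - w ∈ Rset p n x y i) :
    Fm p n s v - Fm p n s w ∈ Rset p n x y i' := by
  haveI : NeZero p := ⟨hp.pos.ne'⟩
  set cmap := ZMod.castHom (show p ∣ n * p ^ 3 from ⟨n * p ^ 2, by ring⟩) (ZMod p) with hcmap
  set a := rr p n v with ha
  set b := rr p n w with hb
  have hav : ((a : ℕ) : ZMod p) = cmap v := cast_rr p n v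
  have hbw : ((b : ℕ) : ZMod p) = cmap w := cast_rr p n w
  obtain ⟨j, hj⟩ : ∃ j, i = j + 1 := ⟨i - 1, by omega⟩
  obtain ⟨j', hj'⟩ : ∃ j', i' = j' + 1 := ⟨i' - 1, by omega⟩
  have hm' : j + s = j' + p * m := by omega
  have C0 : (n : ZMod (n * p ^ 3)) * (p : ZMod (n * p ^ 3)) ^ 3 = 0 := by
    have h := ZMod.natCast_self (n * p ^ 3)
    push_cast at h
    exact h
  have hdp : ((dNum p n x y i : ℕ) : ZMod p) = (x : ZMod p) := by
    simp only [dNum, hj, Nat.add_sub_cancel]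
    push_cast
    rw [ZMod.natCast_self]
    ring
  simp only [Rset, Set.mem_union, Set.mem_insert_iff, Set.mem_singleton_iff,
    Set.mem_setOf_eq] at hvw ⊢
  rcases hvw with ((hz | hz) | ⟨k, hk, hz⟩) | ⟨k, hk, hz⟩
  · -- v - w = p
    have hab : a = b := by
      have h1 : cmap v = cmap w := by
        have : cmap (v - w) = 0 := by rw [hz, map_natCast, ZMod.natCast_self]
        rw [map_sub] at this
        linear_combination this
      have : ((a : ℕ) : ZMod p) = ((b : ℕ) : ZMod p) := by rw [hav, hbw, h1]
      have h2 := (ZMod.natCast_eq_natCast_iff a b p).mp this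
      exact Nat.ModEq.eq_of_lt_of_lt h2 (rr_lt p n v) (rr_lt p n w)
    refine Or.inl (Or.inl (Or.inl ?_))
    rw [Fm_sub, ← ha, ← hb, hab, sub_self, mul_zero, add_zero, hz]
  · -- v - w = -p
    have hab : a = b := by
      have h1 : cmap v = cmap w := by
        have : cmap (v - w) = 0 := by
          rw [hz, map_neg, map_natCast, ZMod.natCast_self, neg_zero]
        rw [map_sub] at this
        linear_combination this
      have : ((a : ℕ) : ZMod p) = ((b : ℕ) : ZMod p) := by rw [hav, hbw, h1]
      have h2 := (ZMod.natCast_eq_natCast_iff a b p).mp this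
      exact Nat.ModEq.eq_of_lt_of_lt h2 (rr_lt p n v) (rr_lt p n w)
    refine Or.inl (Or.inl (Or.inr ?_))
    rw [Fm_sub, ← ha, ← hb, hab, sub_self, mul_zero, add_zero, hz]
  · -- v - w = k n p² + d_i
    -- mod p relation : a ≡ b + x
    have hcongr : ((a : ℕ) : ZMod p) = (((b + x : ℕ)) : ZMod p) := by
      have h1 : cmap (v - w) = (x : ZMod p) := by
        rw [hz, map_add, map_natCast, map_natCast, hdp]
        have : ((k * n * p ^ 2 : ℕ) : ZMod p) = 0 := by
          push_cast; rw [ZMod.natCast_self]; ring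
        rw [this, zero_add]
      rw [map_sub, ← hav, ← hbw] at h1
      push_cast
      linear_combination h1
    have hmod := (ZMod.natCast_eq_natCast_iff a (b + x) p).mp hcongr
    have halt : a < p := rr_lt p n v
    have hamod : (b + x) % p = a := by
      have h5 : a % p = (b + x) % p := hmod
      rw [Nat.mod_eq_of_lt halt] at h5
      exact h5.symm
    obtain ⟨q, hq⟩ : ∃ q, b + x = p * q + a :=
      ⟨(b + x) / p, by rw [← hamod]; exact (Nat.div_add_mod (b + x) p).symm⟩
    set K := k + m * x + (p - s * q % p) with hK
    set k' := K % p with hk'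
    refine Or.inl (Or.inr ⟨k', ?_, ?_⟩)
    · have := Nat.mod_lt K hp.pos; omega
    · obtain ⟨u1, hu1⟩ : ∃ u1, K = p * u1 + k' :=
        ⟨K / p, by rw [hk']; exact (Nat.div_add_mod K p).symm⟩
      set e2 := s * q % p with he2
      obtain ⟨u2, hu2⟩ : ∃ u2, s * q = p * u2 + e2 := ⟨s * q / p, (Nat.div_add_mod _ p).symm⟩
      have he2p : e2 ≤ p := (Nat.mod_lt _ hp.pos).le
      have hKe : k + m * x + p = p * u1 + k' + e2 := by omega
      have C1 : (b : ZMod (n * p ^ 3)) + (x : ZMod (n * p ^ 3)) = (p : ZMod (n * p ^ 3)) * q + a := by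
        have := congrArg (fun t : ℕ => (t : ZMod (n * p ^ 3))) hq; push_cast at this; exact this
      have C2 : (s : ZMod (n * p ^ 3)) * q = (p : ZMod (n * p ^ 3)) * u2 + e2 := by
        have := congrArg (fun t : ℕ => (t : ZMod (n * p ^ 3))) hu2; push_cast at this; exact this
      have C3 : (k : ZMod (n * p ^ 3)) + (m : ZMod (n * p ^ 3)) * x + p = (p : ZMod (n * p ^ 3)) * u1 + k' + e2 := by
        have := congrArg (fun t : ℕ => (t : ZMod (n * p ^ 3))) hKe; push_cast at this; exact this
      have C4 : (j : ZMod (n * p ^ 3)) + s = (j' : ZMod (n * p ^ 3)) + (p : ZMod (n * p ^ 3)) * m := by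
        have := congrArg (fun t : ℕ => (t : ZMod (n * p ^ 3))) hm'; push_cast at this; exact this
      rw [Fm_sub, ← ha, ← hb, hz]
      simp only [dNum, hj, hj', Nat.add_sub_cancel]
      push_cast
      linear_combination (-((s : ZMod (n * p ^ 3)) * n * p)) * C1 + ((x : ZMod (n * p ^ 3)) * p * n) * C4 +
        (-((n : ZMod (n * p ^ 3)) * p ^ 2)) * C2 + ((n : ZMod (n * p ^ 3)) * p ^ 2) * C3 + ((u1 : ZMod (n * p ^ 3)) - u2 - 1) * C0
  · -- v - w = k n p² - d_i
    have hcongr : (((a + x : ℕ)) : ZMod p) = ((b : ℕ) : ZMod p) := by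
      have h1 : cmap (v - w) = -(x : ZMod p) := by
        rw [hz, map_sub, map_natCast, map_natCast, hdp]
        have : ((k * n * p ^ 2 : ℕ) : ZMod p) = 0 := by
          push_cast; rw [ZMod.natCast_self]; ring
        rw [this, zero_sub]
      rw [map_sub, ← hav, ← hbw] at h1
      push_cast
      linear_combination h1
    have hmod := (ZMod.natCast_eq_natCast_iff (a + x) b p).mp hcongr
    have hblt : b < p := rr_lt p n w
    have hbmod : (a + x) % p = b := by
      have h5 : (a + x) % p = b % p := hmod
      rw [Nat.mod_eq_of_lt hblt] at h5
      exact h5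
    obtain ⟨q, hq⟩ : ∃ q, a + x = p * q + b :=
      ⟨(a + x) / p, by rw [← hbmod]; exact (Nat.div_add_mod (a + x) p).symm⟩
    set K := k + s * q + (p - m * x % p) with hK
    set k' := K % p with hk'
    refine Or.inr ⟨k', ?_, ?_⟩
    · have := Nat.mod_lt K hp.pos; omega
    · obtain ⟨u1, hu1⟩ : ∃ u1, K = p * u1 + k' :=
        ⟨K / p, by rw [hk']; exact (Nat.div_add_mod K p).symm⟩
      set e3 := m * x % p with he3
      obtain ⟨u3, hu3⟩ : ∃ u3, m * x = p * u3 + e3 := ⟨m * x / p, (Nat.div_add_mod _ p).symm⟩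
      have he3p : e3 ≤ p := (Nat.mod_lt _ hp.pos).le
      have hKe : k + s * q + p = p * u1 + k' + e3 := by omega
      have C1 : (a : ZMod (n * p ^ 3)) + (x : ZMod (n * p ^ 3)) = (p : ZMod (n * p ^ 3)) * q + b := by
        have := congrArg (fun t : ℕ => (t : ZMod (n * p ^ 3))) hq; push_cast at this; exact this
      have C2 : (m : ZMod (n * p ^ 3)) * x = (p : ZMod (n * p ^ 3)) * u3 + e3 := by
        have := congrArg (fun t : ℕ => (t : ZMod (n * p ^ 3))) hu3; push_cast at this; exact this
      have C3 : (k : ZMod (n * p ^ 3)) + (s : ZMod (n * p ^ 3)) * q + p = (p : ZMod (n * p ^ 3)) * u1 + k' + e3 := by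
        have := congrArg (fun t : ℕ => (t : ZMod (n * p ^ 3))) hKe; push_cast at this; exact this
      have C4 : (j : ZMod (n * p ^ 3)) + s = (j' : ZMod (n * p ^ 3)) + (p : ZMod (n * p ^ 3)) * m := by
        have := congrArg (fun t : ℕ => (t : ZMod (n * p ^ 3))) hm'; push_cast at this; exact this
      rw [Fm_sub, ← ha, ← hb, hz]
      simp only [dNum, hj, hj', Nat.add_sub_cancel]
      push_cast
      linear_combination ((s : ZMod (n * p ^ 3)) * n * p) * C1 + (-((x : ZMod (n * p ^ 3)) * p * n)) * C4 +
        (-((n : ZMod (n * p ^ 3)) * p ^ 2)) * C2 + ((n : ZMod (n * p ^ 3)) * p ^ 2) * C3 + ((u1 : ZMod (n * p ^ 3)) - u3 - 1) * C0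

end Stmt14Aux
/-- For an odd prime `p`, `n ≥ 1`, `1 ≤ x ≤ p−1` and `0 ≤ y ≤ np−1`, the `p` circulant graphs
`C_{np³}(R_1), …, C_{np³}(R_p)` are pairwise isomorphic. -/
theorem stmt_14 (p n x y : ℕ) (hp : p.Prime) (hodd : Odd p) (hn : 1 ≤ n)
    (hx1 : 1 ≤ x) (hx2 : x ≤ p - 1) (hy : y ≤ n * p - 1) :
    ∀ i i' : ℕ, 1 ≤ i → i ≤ p → 1 ≤ i' → i' ≤ p →
      Nonempty (circulantGraph (Rset p n x y i) ≃g circulantGraph (Rset p n x y i')) := by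
  intro i i' hi hip hi' hip'
  haveI : NeZero p := ⟨hp.pos.ne'⟩
  set s := i' + p - i with hs
  set s' := 2 * p ^ 2 - s with hs'
  have hpsq : p ≤ p ^ 2 := Nat.le_self_pow two_ne_zero p
  have hsle : s ≤ 2 * p ^ 2 := by omega
  have hss : s + s' = 2 * p ^ 2 := by omega
  have hm1 : i - 1 + s = (i' - 1) + p * 1 := by omega
  have hm2 : i' - 1 + s' = (i - 1) + p * (2 * p - 1) := by
    have hps : p * (2 * p - 1) + p = 2 * p ^ 2 := by
      obtain ⟨t, rfl⟩ : ∃ t, p = t + 1 := ⟨p - 1, by omega⟩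
      have h2 : 2 * (t + 1) - 1 = 2 * t + 1 := by omega
      rw [h2]; ring
    -- linearize
    generalize hP : p * (2 * p - 1) = P at *
    generalize hQ : p ^ 2 = Q at *
    omega
  have hinj : Function.Injective (Stmt14Aux.Fm p n s) :=
    Function.LeftInverse.injective (g := Stmt14Aux.Fm p n s') (fun v => Stmt14Aux.Fm_inv p n s s' hss v)
  refine ⟨⟨⟨Stmt14Aux.Fm p n s, Stmt14Aux.Fm p n s',
    fun v => Stmt14Aux.Fm_inv p n s s' hss v,
    fun v => Stmt14Aux.Fm_inv p n s' s (by omega) v⟩, ?_⟩⟩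
  intro v w
  simp only [Equiv.coe_fn_mk, circulantGraph_adj]
  constructor
  · rintro ⟨hne, hmem⟩
    refine ⟨fun hEq => hne (by rw [hEq]), ?_⟩
    rcases hmem with h | h
    · left
      have h2 := Stmt14Aux.key p n x y i' i s' (2 * p - 1) hp hi' hi hm2 _ _ h
      rwa [Stmt14Aux.Fm_inv p n s s' hss, Stmt14Aux.Fm_inv p n s s' hss] at h2
    · right
      have h2 := Stmt14Aux.key p n x y i' i s' (2 * p - 1) hp hi' hi hm2 _ _ h
      rwa [Stmt14Aux.Fm_inv p n s s' hss, Stmt14Aux.Fm_inv p n s s' hss] at h2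
  · rintro ⟨hne, hmem⟩
    refine ⟨fun hEq => hne (hinj hEq), ?_⟩
    rcases hmem with h | h
    · exact Or.inl (Stmt14Aux.key p n x y i i' s 1 hp hi hi' hm1 _ _ h)
    · exact Or.inr (Stmt14Aux.key p n x y i i' s 1 hp hi hi' hm1 _ _ h)
end

section
/- Let R = {1, 6, 17, 19}, S = {6, 7, 11, 25}, T = {5, 6, 13, 23} as subsets of ZMod 54. Then the map θ₂(x) = x + 6·j(x) is a graph isomorphism from C₅₄(R) onto C₅₄(S) and the map θ₄(x) = x + 12·j(x) is a graph isomorphism from C₅₄(R) onto C₅₄(T); moreover, for every unit u of ZMod 54, u·R^± ≠ S^± and u·R^± ≠ T^±. Hence C₅₄(R), C₅₄(S), C₅₄(T) are pairwise isomorphic but C₅₄(R) is Adam isomorphic to neither C₅₄(S) nor C₅₄(T), so the triple is Type-2 isomorphic. -/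
open SimpleGraph

private lemma bij2 : Function.Bijective (fun x => x + 6 * (j54 x : ZMod 54)) := by decide

private lemma bij4 : Function.Bijective (fun x => x + 12 * (j54 x : ZMod 54)) := by decide

private lemma adj2 : ∀ a b : ZMod 54,
    (circulantGraph ({1,6,17,19} : Set (ZMod 54))).Adj a b ↔
    (circulantGraph ({6,7,11,25} : Set (ZMod 54))).Adj
      (a + 6 * (j54 a : ZMod 54)) (b + 6 * (j54 b : ZMod 54)) := by
  simp only [circulantGraph_adj, Set.mem_insert_iff, Set.mem_singleton_iff]
  decide

private lemma adj4 : ∀ a b : ZMod 54,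
    (circulantGraph ({1,6,17,19} : Set (ZMod 54))).Adj a b ↔
    (circulantGraph ({5,6,13,23} : Set (ZMod 54))).Adj
      (a + 12 * (j54 a : ZMod 54)) (b + 12 * (j54 b : ZMod 54)) := by
  simp only [circulantGraph_adj, Set.mem_insert_iff, Set.mem_singleton_iff]
  decide

private lemma unitsS (u : (ZMod 54)ˣ) :
    (fun r => (u : ZMod 54) * r) ''
      (({1,6,17,19} : Set (ZMod 54)) ∪ -({1,6,17,19} : Set (ZMod 54))) ≠
    ({6,7,11,25} : Set (ZMod 54)) ∪ -({6,7,11,25} : Set (ZMod 54)) := by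
  intro h
  have h' := Set.ext_iff.mp h
  simp only [Set.image_union, Set.neg_insert, Set.neg_singleton, Set.image_insert_eq,
    Set.image_singleton, Set.mem_union, Set.mem_insert_iff, Set.mem_singleton_iff] at h'
  obtain ⟨w, hw⟩ : ∃ w : ZMod 54, (u : ZMod 54) * w = 1 := ⟨↑u⁻¹, by exact_mod_cast u.mul_inv⟩
  revert h' hw
  generalize (u : ZMod 54) = v
  revert w v
  decide

private lemma unitsT (u : (ZMod 54)ˣ) :
    (fun r => (u : ZMod 54) * r) ''
      (({1,6,17,19} : Set (ZMod 54)) ∪ -({1,6,17,19} : Set (ZMod 54))) ≠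
    ({5,6,13,23} : Set (ZMod 54)) ∪ -({5,6,13,23} : Set (ZMod 54)) := by
  intro h
  have h' := Set.ext_iff.mp h
  simp only [Set.image_union, Set.neg_insert, Set.neg_singleton, Set.image_insert_eq,
    Set.image_singleton, Set.mem_union, Set.mem_insert_iff, Set.mem_singleton_iff] at h'
  obtain ⟨w, hw⟩ : ∃ w : ZMod 54, (u : ZMod 54) * w = 1 := ⟨↑u⁻¹, by exact_mod_cast u.mul_inv⟩
  revert h' hw
  generalize (u : ZMod 54) = v
  revert w v
  decide

private noncomputable def isoRS : circulantGraph ({1,6,17,19} : Set (ZMod 54)) ≃g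
    circulantGraph ({6,7,11,25} : Set (ZMod 54)) :=
  ⟨Equiv.ofBijective _ bij2, fun {a b} => (adj2 a b).symm⟩

private noncomputable def isoRT : circulantGraph ({1,6,17,19} : Set (ZMod 54)) ≃g
    circulantGraph ({5,6,13,23} : Set (ZMod 54)) :=
  ⟨Equiv.ofBijective _ bij4, fun {a b} => (adj4 a b).symm⟩

/-- For `R = {1, 6, 17, 19}`, `S = {6, 7, 11, 25}`, `T = {5, 6, 13, 23}` in `ZMod 54`:
`θ₂(x) = x + 6·j(x)` is a graph isomorphism from `C₅₄(R)` onto `C₅₄(S)`, and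
`θ₄(x) = x + 12·j(x)` is a graph isomorphism from `C₅₄(R)` onto `C₅₄(T)`; moreover for
every unit `u` of `ZMod 54`, `u·R^± ≠ S^±` and `u·R^± ≠ T^±`.  Hence the three graphs are
pairwise isomorphic but not Adam isomorphic: the triple is Type-2 isomorphic. -/
theorem stmt_16 :
    let R : Set (ZMod 54) := {1, 6, 17, 19}
    let S : Set (ZMod 54) := {6, 7, 11, 25}
    let T : Set (ZMod 54) := {5, 6, 13, 23}
    let θ₂ : ZMod 54 → ZMod 54 := fun x => x + 6 * (j54 x : ZMod 54)
    let θ₄ : ZMod 54 → ZMod 54 := fun x => x + 12 * (j54 x : ZMod 54)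
    (Function.Bijective θ₂ ∧
      ∀ a b : ZMod 54,
        (circulantGraph R).Adj a b ↔ (circulantGraph S).Adj (θ₂ a) (θ₂ b)) ∧
    (Function.Bijective θ₄ ∧
      ∀ a b : ZMod 54,
        (circulantGraph R).Adj a b ↔ (circulantGraph T).Adj (θ₄ a) (θ₄ b)) ∧
    (∀ u : (ZMod 54)ˣ,
      (fun r => (u : ZMod 54) * r) '' (R ∪ -R) ≠ S ∪ -S ∧
      (fun r => (u : ZMod 54) * r) '' (R ∪ -R) ≠ T ∪ -T) ∧
    Nonempty (circulantGraph R ≃g circulantGraph S) ∧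
    Nonempty (circulantGraph R ≃g circulantGraph T) ∧
    Nonempty (circulantGraph S ≃g circulantGraph T) := by
  intro R S T θ₂ θ₄
  exact ⟨⟨bij2, adj2⟩, ⟨bij4, adj4⟩, fun u => ⟨unitsS u, unitsT u⟩,
    ⟨isoRS⟩, ⟨isoRT⟩, ⟨isoRS.symm.trans isoRT⟩⟩
end

section
/- Let R = {2, 6, 16, 20}, S = {4, 6, 14, 22}, T = {6, 8, 10, 26} as subsets of ZMod 54. Then the map θ₂(x) = x + 6·j(x) is a graph isomorphism from C₅₄(R) onto C₅₄(S) and the map θ₄(x) = x + 12·j(x) is a graph isomorphism from C₅₄(R) onto C₅₄(T); moreover, for every unit u of ZMod 54, u·R^± ≠ S^± and u·R^± ≠ T^±. Hence C₅₄(R), C₅₄(S), C₅₄(T) are pairwise isomorphic but C₅₄(R) is Adam isomorphic to neither C₅₄(S) nor C₅₄(T), so the triple is Type-2 isomorphic. -/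
set_option maxRecDepth 8000
set_option maxHeartbeats 2000000

open SimpleGraph

/-- For `R = {2, 6, 16, 20}`, `S = {4, 6, 14, 22}`, `T = {6, 8, 10, 26}` in `ZMod 54`:
`θ₂(x) = x + 6·j(x)` is a graph isomorphism from `C₅₄(R)` onto `C₅₄(S)`, and
`θ₄(x) = x + 12·j(x)` is a graph isomorphism from `C₅₄(R)` onto `C₅₄(T)`; moreover for
every unit `u` of `ZMod 54`, `u·R^± ≠ S^±` and `u·R^± ≠ T^±`.  Hence the three graphs are
pairwise isomorphic but not Adam isomorphic: the triple is Type-2 isomorphic. -/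
theorem stmt_17 :
    let R : Set (ZMod 54) := {2, 6, 16, 20}
    let S : Set (ZMod 54) := {4, 6, 14, 22}
    let T : Set (ZMod 54) := {6, 8, 10, 26}
    let θ₂ : ZMod 54 → ZMod 54 := fun x => x + 6 * (j54 x : ZMod 54)
    let θ₄ : ZMod 54 → ZMod 54 := fun x => x + 12 * (j54 x : ZMod 54)
    (Function.Bijective θ₂ ∧
      ∀ a b : ZMod 54,
        (circulantGraph R).Adj a b ↔ (circulantGraph S).Adj (θ₂ a) (θ₂ b)) ∧
    (Function.Bijective θ₄ ∧
      ∀ a b : ZMod 54,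
        (circulantGraph R).Adj a b ↔ (circulantGraph T).Adj (θ₄ a) (θ₄ b)) ∧
    (∀ u : (ZMod 54)ˣ,
      (fun r => (u : ZMod 54) * r) '' (R ∪ -R) ≠ S ∪ -S ∧
      (fun r => (u : ZMod 54) * r) '' (R ∪ -R) ≠ T ∪ -T) ∧
    Nonempty (circulantGraph R ≃g circulantGraph S) ∧
    Nonempty (circulantGraph R ≃g circulantGraph T) ∧
    Nonempty (circulantGraph S ≃g circulantGraph T) := by
  intro R S T θ₂ θ₄
  have hbij2 : Function.Bijective θ₂ := by decide
  have hbij4 : Function.Bijective θ₄ := by decide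
  have hadj2 : ∀ a b : ZMod 54,
      (circulantGraph R).Adj a b ↔ (circulantGraph S).Adj (θ₂ a) (θ₂ b) := by
    simp only [R, S, θ₂, circulantGraph_adj, Set.mem_insert_iff, Set.mem_singleton_iff]
    decide
  have hadj4 : ∀ a b : ZMod 54,
      (circulantGraph R).Adj a b ↔ (circulantGraph T).Adj (θ₄ a) (θ₄ b) := by
    simp only [R, T, θ₄, circulantGraph_adj, Set.mem_insert_iff, Set.mem_singleton_iff]
    decide
  have hu1 : ∀ u : (ZMod 54)ˣ,
      (fun r => (u : ZMod 54) * r) '' (R ∪ -R) ≠ S ∪ -S := by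
    simp only [R, S, ne_eq, Set.ext_iff, not_forall, Set.mem_image, Set.mem_union,
      Set.mem_neg, Set.mem_insert_iff, Set.mem_singleton_iff]
    decide
  have hu2 : ∀ u : (ZMod 54)ˣ,
      (fun r => (u : ZMod 54) * r) '' (R ∪ -R) ≠ T ∪ -T := by
    simp only [R, T, ne_eq, Set.ext_iff, not_forall, Set.mem_image, Set.mem_union,
      Set.mem_neg, Set.mem_insert_iff, Set.mem_singleton_iff]
    decide
  have hu : ∀ u : (ZMod 54)ˣ,
      (fun r => (u : ZMod 54) * r) '' (R ∪ -R) ≠ S ∪ -S ∧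
      (fun r => (u : ZMod 54) * r) '' (R ∪ -R) ≠ T ∪ -T :=
    fun u => ⟨hu1 u, hu2 u⟩
  have e2 : circulantGraph R ≃g circulantGraph S :=
    { toEquiv := Equiv.ofBijective θ₂ hbij2
      map_rel_iff' := fun {a b} => (hadj2 a b).symm }
  have e4 : circulantGraph R ≃g circulantGraph T :=
    { toEquiv := Equiv.ofBijective θ₄ hbij4
      map_rel_iff' := fun {a b} => (hadj4 a b).symm }
  exact ⟨⟨hbij2, hadj2⟩, ⟨hbij4, hadj4⟩, hu, ⟨e2⟩, ⟨e4⟩, ⟨e2.symm.trans e4⟩⟩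
end

section
/- Let R = {1, 3, 6, 17, 19}, S = {3, 6, 7, 11, 25}, T = {3, 5, 6, 13, 23} as subsets of ZMod 54. Then the map θ₂(x) = x + 6·j(x) is a graph isomorphism from C₅₄(R) onto C₅₄(S) and the map θ₄(x) = x + 12·j(x) is a graph isomorphism from C₅₄(R) onto C₅₄(T); moreover, for every unit u of ZMod 54, u·R^± ≠ S^± and u·R^± ≠ T^±. Hence C₅₄(R), C₅₄(S), C₅₄(T) are pairwise isomorphic but C₅₄(R) is Adam isomorphic to neither C₅₄(S) nor C₅₄(T), so the triple is Type-2 isomorphic. -/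
set_option maxRecDepth 100000
set_option maxHeartbeats 2000000

open SimpleGraph

lemma key_img (u : (ZMod 54)ˣ) (A B : Set (ZMod 54)) :
    (fun r => (u : ZMod 54) * r) '' A = B ↔ ∀ x, x ∈ A ↔ (u : ZMod 54) * x ∈ B := by
  constructor
  · rintro rfl x
    constructor
    · exact fun hx => ⟨x, hx, rfl⟩
    · rintro ⟨y, hy, h⟩
      have : y = x := by
        have := congrArg (fun z => ((u⁻¹ : (ZMod 54)ˣ) : ZMod 54) * z) h
        simpa [← mul_assoc] using this
      rwa [← this]
  · intro h
    ext y
    simp only [Set.mem_image]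
    constructor
    · rintro ⟨x, hx, rfl⟩; exact (h x).1 hx
    · intro hy
      refine ⟨((u⁻¹ : (ZMod 54)ˣ) : ZMod 54) * y, ?_, ?_⟩
      · rw [h]; simpa [← mul_assoc] using hy
      · simp [← mul_assoc]

/-- For `R = {1, 3, 6, 17, 19}`, `S = {3, 6, 7, 11, 25}`, `T = {3, 5, 6, 13, 23}` in `ZMod 54`:
`θ₂(x) = x + 6·j(x)` is a graph isomorphism from `C₅₄(R)` onto `C₅₄(S)`, and
`θ₄(x) = x + 12·j(x)` is a graph isomorphism from `C₅₄(R)` onto `C₅₄(T)`; moreover for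
every unit `u` of `ZMod 54`, `u·R^± ≠ S^±` and `u·R^± ≠ T^±`.  Hence the three graphs are
pairwise isomorphic but not Adam isomorphic: the triple is Type-2 isomorphic. -/
theorem stmt_18 :
    let R : Set (ZMod 54) := {1, 3, 6, 17, 19}
    let S : Set (ZMod 54) := {3, 6, 7, 11, 25}
    let T : Set (ZMod 54) := {3, 5, 6, 13, 23}
    let θ₂ : ZMod 54 → ZMod 54 := fun x => x + 6 * (j54 x : ZMod 54)
    let θ₄ : ZMod 54 → ZMod 54 := fun x => x + 12 * (j54 x : ZMod 54)
    (Function.Bijective θ₂ ∧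
      ∀ a b : ZMod 54,
        (circulantGraph R).Adj a b ↔ (circulantGraph S).Adj (θ₂ a) (θ₂ b)) ∧
    (Function.Bijective θ₄ ∧
      ∀ a b : ZMod 54,
        (circulantGraph R).Adj a b ↔ (circulantGraph T).Adj (θ₄ a) (θ₄ b)) ∧
    (∀ u : (ZMod 54)ˣ,
      (fun r => (u : ZMod 54) * r) '' (R ∪ -R) ≠ S ∪ -S ∧
      (fun r => (u : ZMod 54) * r) '' (R ∪ -R) ≠ T ∪ -T) ∧
    Nonempty (circulantGraph R ≃g circulantGraph S) ∧
    Nonempty (circulantGraph R ≃g circulantGraph T) ∧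
    Nonempty (circulantGraph S ≃g circulantGraph T) := by
  intro R S T θ₂ θ₄
  have h2bij : Function.Bijective θ₂ := by
    show Function.Bijective (fun x : ZMod 54 => x + 6 * (j54 x : ZMod 54))
    decide
  have h4bij : Function.Bijective θ₄ := by
    show Function.Bijective (fun x : ZMod 54 => x + 12 * (j54 x : ZMod 54))
    decide
  have h2adj : ∀ a b : ZMod 54,
      (circulantGraph R).Adj a b ↔ (circulantGraph S).Adj (θ₂ a) (θ₂ b) := by
    show ∀ a b : ZMod 54,
      (circulantGraph ({1,3,6,17,19} : Set (ZMod 54))).Adj a b ↔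
      (circulantGraph ({3,6,7,11,25} : Set (ZMod 54))).Adj
        (a + 6 * (j54 a : ZMod 54)) (b + 6 * (j54 b : ZMod 54))
    simp only [circulantGraph, fromRel_adj, Set.mem_insert_iff, Set.mem_singleton_iff]
    decide
  have h4adj : ∀ a b : ZMod 54,
      (circulantGraph R).Adj a b ↔ (circulantGraph T).Adj (θ₄ a) (θ₄ b) := by
    show ∀ a b : ZMod 54,
      (circulantGraph ({1,3,6,17,19} : Set (ZMod 54))).Adj a b ↔
      (circulantGraph ({3,5,6,13,23} : Set (ZMod 54))).Adj
        (a + 12 * (j54 a : ZMod 54)) (b + 12 * (j54 b : ZMod 54))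
    simp only [circulantGraph, fromRel_adj, Set.mem_insert_iff, Set.mem_singleton_iff]
    decide
  have hu : ∀ u : (ZMod 54)ˣ,
      (fun r => (u : ZMod 54) * r) '' (R ∪ -R) ≠ S ∪ -S ∧
      (fun r => (u : ZMod 54) * r) '' (R ∪ -R) ≠ T ∪ -T := by
    intro u
    constructor
    · rw [Ne, key_img]
      simp only [Set.mem_union, Set.mem_neg, Set.mem_insert_iff, Set.mem_singleton_iff,
        not_forall]
      revert u
      decide
    · rw [Ne, key_img]
      simp only [Set.mem_union, Set.mem_neg, Set.mem_insert_iff, Set.mem_singleton_iff,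
        not_forall]
      revert u
      decide
  have e2 : circulantGraph R ≃g circulantGraph S :=
    { toEquiv := Equiv.ofBijective θ₂ h2bij
      map_rel_iff' := fun {a b} => (h2adj a b).symm }
  have e4 : circulantGraph R ≃g circulantGraph T :=
    { toEquiv := Equiv.ofBijective θ₄ h4bij
      map_rel_iff' := fun {a b} => (h4adj a b).symm }
  exact ⟨⟨h2bij, h2adj⟩, ⟨h4bij, h4adj⟩, hu, ⟨e2⟩, ⟨e4⟩, ⟨e2.symm.trans e4⟩⟩
end

section
/- Let R = {1, 6, 9, 12, 15, 17, 18, 19, 21, 24, 27}, S = {6, 7, 9, 11, 12, 15, 18, 21, 24, 25, 27}, T = {5, 6, 9, 12, 13, 15, 18, 21, 23, 24, 27} as subsets of ZMod 54. Then the map θ₂(x) = x + 6·j(x) is a graph isomorphism from C₅₄(R) onto C₅₄(S) and the map θ₄(x) = x + 12·j(x) is a graph isomorphism from C₅₄(R) onto C₅₄(T); moreover, for every unit u of ZMod 54, u·R^± ≠ S^± and u·R^± ≠ T^±. Hence C₅₄(R), C₅₄(S), C₅₄(T) are pairwise isomorphic but C₅₄(R) is Adam isomorphic to neither C₅₄(S)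 nor C₅₄(T), so the triple is Type-2 isomorphic. -/
open SimpleGraph

set_option maxHeartbeats 4000000 in
set_option maxRecDepth 100000 in
private lemma hbij2' : Function.Bijective (fun x : ZMod 54 => x + 6 * (j54 x : ZMod 54)) := by
  decide

set_option maxHeartbeats 4000000 in
set_option maxRecDepth 100000 in
private lemma hbij4' : Function.Bijective (fun x : ZMod 54 => x + 12 * (j54 x : ZMod 54)) := by
  decide

set_option maxHeartbeats 8000000 in
set_option maxRecDepth 100000 in
private lemma hadj2' : ∀ a b : ZMod 54,
    (circulantGraph ({1, 6, 9, 12, 15, 17, 18, 19, 21, 24, 27} : Set (ZMod 54))).Adj a b ↔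
    (circulantGraph ({6, 7, 9, 11, 12, 15, 18, 21, 24, 25, 27} : Set (ZMod 54))).Adj
      (a + 6 * (j54 a : ZMod 54)) (b + 6 * (j54 b : ZMod 54)) := by
  decide

set_option maxHeartbeats 8000000 in
set_option maxRecDepth 100000 in
private lemma hadj4' : ∀ a b : ZMod 54,
    (circulantGraph ({1, 6, 9, 12, 15, 17, 18, 19, 21, 24, 27} : Set (ZMod 54))).Adj a b ↔
    (circulantGraph ({5, 6, 9, 12, 13, 15, 18, 21, 23, 24, 27} : Set (ZMod 54))).Adj
      (a + 12 * (j54 a : ZMod 54)) (b + 12 * (j54 b : ZMod 54)) := by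
  decide

set_option maxHeartbeats 4000000 in
set_option maxRecDepth 100000 in
set_option synthInstance.maxHeartbeats 1000000 in
set_option synthInstance.maxSize 2000 in
private lemma keyS' : ∀ v : ZMod 54, ∃ r : ZMod 54,
    (r ∈ ({1, 6, 9, 12, 15, 17, 18, 19, 21, 24, 27} : Set (ZMod 54)) ∨
     -r ∈ ({1, 6, 9, 12, 15, 17, 18, 19, 21, 24, 27} : Set (ZMod 54))) ∧
    ¬(v * r ∈ ({6, 7, 9, 11, 12, 15, 18, 21, 24, 25, 27} : Set (ZMod 54)) ∨
      -(v * r) ∈ ({6, 7, 9, 11, 12, 15, 18, 21, 24, 25, 27} : Set (ZMod 54))) := by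
  simp only [Set.mem_insert_iff, Set.mem_singleton_iff]
  decide

set_option maxHeartbeats 4000000 in
set_option maxRecDepth 100000 in
set_option synthInstance.maxHeartbeats 1000000 in
set_option synthInstance.maxSize 2000 in
private lemma keyT' : ∀ v : ZMod 54, ∃ r : ZMod 54,
    (r ∈ ({1, 6, 9, 12, 15, 17, 18, 19, 21, 24, 27} : Set (ZMod 54)) ∨
     -r ∈ ({1, 6, 9, 12, 15, 17, 18, 19, 21, 24, 27} : Set (ZMod 54))) ∧
    ¬(v * r ∈ ({5, 6, 9, 12, 13, 15, 18, 21, 23, 24, 27} : Set (ZMod 54)) ∨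
      -(v * r) ∈ ({5, 6, 9, 12, 13, 15, 18, 21, 23, 24, 27} : Set (ZMod 54))) := by
  simp only [Set.mem_insert_iff, Set.mem_singleton_iff]
  decide

private lemma neq_of_key {v : ZMod 54} {A B : Set (ZMod 54)}
    (h : ∃ r : ZMod 54, (r ∈ A ∨ -r ∈ A) ∧ ¬(v * r ∈ B ∨ -(v * r) ∈ B)) :
    (fun r => v * r) '' (A ∪ -A) ≠ B ∪ -B := by
  obtain ⟨r, hr, hnr⟩ := h
  intro hEq
  have hmem : v * r ∈ (fun r => v * r) '' (A ∪ -A) := by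
    refine ⟨r, ?_, rfl⟩
    rcases hr with h | h
    · exact Or.inl h
    · exact Or.inr h
  rw [hEq] at hmem
  rcases hmem with h | h
  · exact hnr (Or.inl h)
  · exact hnr (Or.inr h)

/-- For `R = {1, 6, 9, 12, 15, 17, 18, 19, 21, 24, 27}`, `S = {6, 7, 9, 11, 12, 15, 18, 21, 24, 25, 27}`, `T = {5, 6, 9, 12, 13, 15, 18, 21, 23, 24, 27}` in `ZMod 54`:
`θ₂(x) = x + 6·j(x)` is a graph isomorphism from `C₅₄(R)` onto `C₅₄(S)`, and
`θ₄(x) = x + 12·j(x)` is a graph isomorphism from `C₅₄(R)` onto `C₅₄(T)`; moreover for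
every unit `u` of `ZMod 54`, `u·R^± ≠ S^±` and `u·R^± ≠ T^±`.  Hence the three graphs are
pairwise isomorphic but not Adam isomorphic: the triple is Type-2 isomorphic. -/
theorem stmt_19 :
    let R : Set (ZMod 54) := {1, 6, 9, 12, 15, 17, 18, 19, 21, 24, 27}
    let S : Set (ZMod 54) := {6, 7, 9, 11, 12, 15, 18, 21, 24, 25, 27}
    let T : Set (ZMod 54) := {5, 6, 9, 12, 13, 15, 18, 21, 23, 24, 27}
    let θ₂ : ZMod 54 → ZMod 54 := fun x => x + 6 * (j54 x : ZMod 54)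
    let θ₄ : ZMod 54 → ZMod 54 := fun x => x + 12 * (j54 x : ZMod 54)
    (Function.Bijective θ₂ ∧
      ∀ a b : ZMod 54,
        (circulantGraph R).Adj a b ↔ (circulantGraph S).Adj (θ₂ a) (θ₂ b)) ∧
    (Function.Bijective θ₄ ∧
      ∀ a b : ZMod 54,
        (circulantGraph R).Adj a b ↔ (circulantGraph T).Adj (θ₄ a) (θ₄ b)) ∧
    (∀ u : (ZMod 54)ˣ,
      (fun r => (u : ZMod 54) * r) '' (R ∪ -R) ≠ S ∪ -S ∧
      (fun r => (u : ZMod 54) * r) '' (R ∪ -R) ≠ T ∪ -T) ∧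
    Nonempty (circulantGraph R ≃g circulantGraph S) ∧
    Nonempty (circulantGraph R ≃g circulantGraph T) ∧
    Nonempty (circulantGraph S ≃g circulantGraph T) := by
  intro R S T θ₂ θ₄
  have isoRS : circulantGraph R ≃g circulantGraph S :=
    ⟨Equiv.ofBijective θ₂ hbij2', fun {a b} => (hadj2' a b).symm⟩
  have isoRT : circulantGraph R ≃g circulantGraph T :=
    ⟨Equiv.ofBijective θ₄ hbij4', fun {a b} => (hadj4' a b).symm⟩
  refine ⟨⟨hbij2', hadj2'⟩, ⟨hbij4', hadj4'⟩,
    fun u => ⟨neq_of_key (keyS' u), neq_of_key (keyT' u)⟩,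
    ⟨isoRS⟩, ⟨isoRT⟩, ⟨isoRS.symm.trans isoRT⟩⟩
end
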